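/- arXiv:2404.10368 — 6 statements merged into one kernel-verified Lean document; each statement's English description precedes it below -/
import Mathlib

section
/- Weak maximum principle for the Lax–Friedrichs scheme: Suppose the initial grid datum satisfies ρ⁰_j ∈ [0,R] for all j ∈ ℤ, and suppose α ≥ V(1 + R‖f'‖) and λ ≤ 1/α, where ‖f'‖ is the sup norm of f' on [0,R]. Then the values produced by the delayed Lax–Friedrichs scheme satisfy ρⁿ_j ∈ [0,R] for all j ∈ ℤ and all n ∈ ℕ. -/
open MeasureTheory Finset Filter

private lemma lf_step (R V α lam a b c fa fc W1 W2 nf : ℝ)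
    (hR : 0 < R)
    (ha0 : 0 ≤ a) (haR : a ≤ R) (hb0 : 0 ≤ b) (hbR : b ≤ R) (hc0 : 0 ≤ c) (hcR : c ≤ R)
    (hfa0 : 0 ≤ fa) (hfa1 : fa ≤ 1) (hfc0 : 0 ≤ fc) (hfcb : fc ≤ nf * (R - c))
    (hW10 : 0 ≤ W1) (hW1V : W1 ≤ V) (hW20 : 0 ≤ W2) (hW2V : W2 ≤ V)
    (hlam : 0 ≤ lam) (hla : lam * α ≤ 1) (hnf : 0 ≤ nf) (hVα : V ≤ α)
    (hVRα : V * R * nf ≤ α) :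
    b + lam * α / 2 * (a - 2*b + c) - lam/2 * (a*fa*W1 - c*fc*W2) ∈ Set.Icc 0 R := by
  have key : b + lam * α / 2 * (a - 2*b + c) - lam/2 * (a*fa*W1 - c*fc*W2)
      = (1 - lam*α)*b + lam/2*(α*a - a*fa*W1) + lam/2*(α*c + c*fc*W2) := by ring
  have hl2 : 0 ≤ lam/2 := by linarith
  have hfw : fa * W1 ≤ V := by nlinarith
  have h2lo : 0 ≤ α*a - a*fa*W1 := by nlinarith
  have h3lo : 0 ≤ α*c + c*fc*W2 := by nlinarith [mul_nonneg (mul_nonneg hc0 hfc0) hW20]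
  have h2hi : α*a - a*fa*W1 ≤ α*R := by nlinarith [mul_nonneg (mul_nonneg ha0 hfa0) hW10]
  have h3hi : α*c + c*fc*W2 ≤ α*R := by
    have e0 : c*fc ≤ R*(nf*(R-c)) := by
      apply mul_le_mul hcR hfcb hfc0 hR.le
    have e1 : c*fc*W2 ≤ R*(nf*(R-c))*W2 := mul_le_mul_of_nonneg_right e0 hW20
    have e2 : R*(nf*(R-c))*W2 ≤ R*(nf*(R-c))*V := by
      apply mul_le_mul_of_nonneg_left hW2V
      have : 0 ≤ R - c := by linarith
      positivity
    have e3 : R*(nf*(R-c))*V ≤ α*(R-c) := by nlinarith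
    linarith
  constructor
  · rw [key]
    have h1 : 0 ≤ (1 - lam*α)*b := mul_nonneg (by linarith) hb0
    have h2 : 0 ≤ lam/2*(α*a - a*fa*W1) := mul_nonneg hl2 h2lo
    have h3 : 0 ≤ lam/2*(α*c + c*fc*W2) := mul_nonneg hl2 h3lo
    linarith
  · rw [key]
    have h1 : (1 - lam*α)*b ≤ (1 - lam*α)*R := mul_le_mul_of_nonneg_left hbR (by linarith)
    have h2 := mul_le_mul_of_nonneg_left h2hi hl2
    have h3 := mul_le_mul_of_nonneg_left h3hi hl2
    linarith

theorem stmt_2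
    (R V L τ : ℝ) (hR : 0 < R) (hV : 0 < V) (hL : 0 < L) (hτ : 0 < τ)
    (v : ℝ → ℝ)
    (hv : ContDiffOn ℝ 2 v (Set.Icc 0 R))
    (hv_range : ∀ x ∈ Set.Icc (0:ℝ) R, v x ∈ Set.Icc 0 V)
    (hv_mono : ∀ x ∈ Set.Icc (0:ℝ) R, deriv v x ≤ 0)
    (hv0 : v 0 = V) (hvR : v R = 0)
    (f : ℝ → ℝ)
    (hf : ContDiffOn ℝ 1 f (Set.Icc 0 R))
    (hf_range : ∀ x ∈ Set.Icc (0:ℝ) R, f x ∈ Set.Icc 0 1)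
    (hf_mono : ∀ x ∈ Set.Icc (0:ℝ) R, deriv f x ≤ 0)
    (hf0 : f 0 = 1) (hfR : f R = 0)
    (hf_hi : ∀ x : ℝ, R < x → f x = 0) (hf_lo : ∀ x : ℝ, x < 0 → f x = 1)
    (ω : ℝ → ℝ)
    (hω : ContDiffOn ℝ 1 ω (Set.Icc 0 L))
    (hω_nonneg : ∀ x ∈ Set.Icc (0:ℝ) L, 0 ≤ ω x)
    (hω_mono : ∀ x ∈ Set.Icc (0:ℝ) L, ∀ y ∈ Set.Icc (0:ℝ) L, x ≤ y → ω y ≤ ω x)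
    (hω_int : ∫ s in (0:ℝ)..L, ω s = 1)
    (hω_ext : ∀ x : ℝ, L < x → ω x = 0)
    (Δx Δt : ℝ) (hΔx : 0 < Δx) (hΔt : 0 < Δt)
    (N nτ : ℕ) (hN : L = N * Δx) (hnτ : τ = nτ * Δt)
    (ωd : ℕ → ℝ)
    (hωd : ∀ k : ℕ, ωd k = (1/Δx) * ∫ x in ((k:ℝ) * Δx)..(((k:ℝ)+1) * Δx), ω x)
    (ρ : ℤ → ℤ → ℝ) (ρ0 : ℤ → ℝ)
    (Vel : ℤ → ℤ → ℝ)
    (hVel : ∀ (n j : ℤ), Vel n j = v (Δx * ∑ k ∈ Finset.range N, ωd k * ρ n (j + (k:ℤ))))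
    (hinit : ∀ n : ℤ, -(nτ:ℤ) ≤ n → n ≤ 0 → ∀ j : ℤ, ρ n j = ρ0 j)
    (α : ℝ) (hα : 0 < α)
    (hscheme : ∀ n : ℤ, 0 ≤ n → ∀ j : ℤ,
      ρ (n+1) j = ρ n j
        + (Δt/Δx) * α / 2 * (ρ n (j+1) - 2 * ρ n j + ρ n (j-1))
        - (Δt/Δx) / 2 *
            (ρ n (j+1) * f (ρ n (j+1)) * Vel (n - (nτ:ℤ)) (j+1)
             - ρ n (j-1) * f (ρ n (j-1)) * Vel (n - (nτ:ℤ)) (j-1)))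
    (nf' : ℝ) (hnf' : nf' = sSup ((fun x => |deriv f x|) '' Set.Icc (0:ℝ) R))
    (hρ0 : ∀ j : ℤ, ρ0 j ∈ Set.Icc 0 R)
    (hCFL1 : V * (1 + R * nf') ≤ α) (hCFL2 : Δt/Δx ≤ 1/α) :
    ∀ (n : ℕ) (j : ℤ), ρ (n:ℤ) j ∈ Set.Icc 0 R := by
  -- boundedness of |deriv f| on [0,R]
  have hud : UniqueDiffOn ℝ (Set.Icc (0:ℝ) R) := uniqueDiffOn_Icc hR
  have hgcont : ContinuousOn (derivWithin f (Set.Icc 0 R)) (Set.Icc (0:ℝ) R) :=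
    hf.continuousOn_derivWithin hud le_rfl
  have hBdd : BddAbove ((fun x => |deriv f x|) '' Set.Icc (0:ℝ) R) := by
    obtain ⟨M, hM⟩ := (isCompact_Icc).exists_bound_of_continuousOn hgcont
    refine ⟨max M (max (|deriv f 0|) (|deriv f R|)), ?_⟩
    rintro y ⟨x, hx, rfl⟩
    rcases eq_or_lt_of_le hx.1 with h0 | h0
    · simp only [← h0]
      exact le_max_of_le_right (le_max_left _ _)
    rcases eq_or_lt_of_le hx.2 with hRx | hRx
    · simp only [hRx]
      exact le_max_of_le_right (le_max_right _ _)
    · have hmem : Set.Icc (0:ℝ) R ∈ nhds x := Icc_mem_nhds h0 hRx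
      have := hM x hx
      rw [Real.norm_eq_abs, derivWithin_of_mem_nhds hmem] at this
      exact le_max_of_le_left this
  have hnf_bound : ∀ x ∈ Set.Icc (0:ℝ) R, |deriv f x| ≤ nf' := by
    intro x hx
    rw [hnf']
    exact le_csSup hBdd ⟨x, hx, rfl⟩
  have hnf_nonneg : 0 ≤ nf' :=
    le_trans (abs_nonneg _) (hnf_bound 0 ⟨le_rfl, hR.le⟩)
  -- key bound: f c ≤ nf' * (R - c)
  have hf_bound : ∀ c ∈ Set.Icc (0:ℝ) R, f c ≤ nf' * (R - c) := by
    intro c hc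
    rcases eq_or_lt_of_le hc.2 with h | h
    · rw [h, hfR]; simp
    · have hsub : Set.Icc c R ⊆ Set.Icc (0:ℝ) R := Set.Icc_subset_Icc hc.1 le_rfl
      have hcont : ContinuousOn f (Set.Icc c R) := hf.continuousOn.mono hsub
      have hdiff : DifferentiableOn ℝ f (Set.Ioo c R) := by
        intro x hx
        have hmem : Set.Icc (0:ℝ) R ∈ nhds x :=
          Icc_mem_nhds (lt_of_le_of_lt hc.1 hx.1) hx.2
        exact ((hf.differentiableOn one_ne_zero x ⟨(hc.1.trans hx.1.le), hx.2.le⟩).differentiableAt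
          hmem).differentiableWithinAt
      obtain ⟨ξ, hξ, hder⟩ := exists_deriv_eq_slope f h hcont hdiff
      have hξR : ξ ∈ Set.Icc (0:ℝ) R := ⟨hc.1.trans hξ.1.le, hξ.2.le⟩
      have hb := hnf_bound ξ hξR
      have hne : R - c ≠ 0 := ne_of_gt (by linarith)
      have : f c = -(deriv f ξ) * (R - c) := by
        rw [hder, hfR]
        field_simp
        ring
      rw [this]
      have h1 : -(deriv f ξ) ≤ |deriv f ξ| := by
        rw [abs_eq_max_neg]; exact le_max_right _ _
      have h2 : (0:ℝ) ≤ R - c := by linarith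
      nlinarith
  -- ωd properties
  have hωd_nonneg : ∀ k < N, 0 ≤ ωd k := by
    intro k hk
    rw [hωd]
    apply mul_nonneg (by positivity)
    apply intervalIntegral.integral_nonneg
    · nlinarith [hΔx.le]
    · intro x hx
      apply hω_nonneg
      constructor
      · have : 0 ≤ (k:ℝ) * Δx := by positivity
        linarith [hx.1]
      · have : ((k:ℝ)+1) * Δx ≤ N * Δx := by
          have : (k:ℝ) + 1 ≤ N := by exact_mod_cast hk
          nlinarith
        rw [hN]; linarith [hx.2]
  have hint : ∀ k < N, IntervalIntegrable ω volume ((k:ℝ)*Δx) (((k:ℝ)+1)*Δx) := by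
    intro k hk
    apply ContinuousOn.intervalIntegrable
    apply hω.continuousOn.mono
    rw [Set.uIcc_of_le (by nlinarith)]
    apply Set.Icc_subset_Icc (by positivity)
    rw [hN]
    have : (k:ℝ) + 1 ≤ N := by exact_mod_cast hk
    nlinarith
  have hωsum : Δx * ∑ k ∈ Finset.range N, ωd k = 1 := by
    have tele : ∑ k ∈ Finset.range N, ∫ x in ((k:ℝ)*Δx)..(((k:ℝ)+1)*Δx), ω x
        = ∫ x in ((0:ℝ)*Δx)..((N:ℝ)*Δx), ω x := by
      have := intervalIntegral.sum_integral_adjacent_intervals (a := fun k : ℕ => (k:ℝ)*Δx)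
        (n := N) (f := ω) (μ := volume) (by intro k hk; push_cast; exact hint k hk)
      simpa using this
    have : Δx * ∑ k ∈ Finset.range N, ωd k
        = ∑ k ∈ Finset.range N, ∫ x in ((k:ℝ)*Δx)..(((k:ℝ)+1)*Δx), ω x := by
      rw [Finset.mul_sum]
      apply Finset.sum_congr rfl
      intro k _
      rw [hωd]
      field_simp
    rw [this, tele]
    simpa [← hN] using hω_int
  -- Vel range
  have hVel_range : ∀ m j : ℤ, (∀ i : ℤ, ρ m i ∈ Set.Icc 0 R) → Vel m j ∈ Set.Icc 0 V := by
    intro m j hm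
    rw [hVel]
    apply hv_range
    constructor
    · apply mul_nonneg hΔx.le
      apply Finset.sum_nonneg
      intro k hk
      exact mul_nonneg (hωd_nonneg k (Finset.mem_range.mp hk)) (hm _).1
    · calc Δx * ∑ k ∈ Finset.range N, ωd k * ρ m (j + (k:ℤ))
          ≤ Δx * ∑ k ∈ Finset.range N, ωd k * R := by
            apply mul_le_mul_of_nonneg_left _ hΔx.le
            apply Finset.sum_le_sum
            intro k hk
            exact mul_le_mul_of_nonneg_left (hm _).2 (hωd_nonneg k (Finset.mem_range.mp hk))
        _ = (Δx * ∑ k ∈ Finset.range N, ωd k) * R := by rw [← Finset.sum_mul]; ring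
        _ = R := by rw [hωsum]; ring
  -- CFL consequences
  have hVα : V ≤ α := by nlinarith [mul_nonneg (mul_nonneg hV.le hR.le) hnf_nonneg]
  have hVRα : V * R * nf' ≤ α := by nlinarith [hV.le]
  have hlam : 0 ≤ Δt/Δx := by positivity
  have hla : (Δt/Δx) * α ≤ 1 := by
    have := mul_le_mul_of_nonneg_right hCFL2 hα.le
    rwa [one_div, inv_mul_cancel₀ hα.ne'] at this
  -- induction
  intro n
  induction n using Nat.strong_induction_on with
  | _ n IH =>
    match n with
    | 0 =>
      intro j
      rw [show ((0:ℕ):ℤ) = 0 from rfl, hinit 0 (by omega) le_rfl]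
      exact hρ0 j
    | Nat.succ m =>
      intro j
      have hm : ∀ i : ℤ, ρ (m:ℤ) i ∈ Set.Icc 0 R := IH m (Nat.lt_succ_self m)
      have hpast : ∀ i : ℤ, ρ ((m:ℤ) - (nτ:ℤ)) i ∈ Set.Icc 0 R := by
        rcases le_or_gt (nτ:ℤ) (m:ℤ) with h | h
        · intro i
          have hp : ((m - nτ : ℕ) : ℤ) = (m:ℤ) - (nτ:ℤ) := by omega
          rw [← hp]
          exact IH (m - nτ) (by omega) i
        · intro i
          rw [hinit _ (by omega) (by omega)]
          exact hρ0 i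
      have hW1 := hVel_range ((m:ℤ) - (nτ:ℤ)) (j+1) hpast
      have hW2 := hVel_range ((m:ℤ) - (nτ:ℤ)) (j-1) hpast
      have hcast : ((m+1 : ℕ) : ℤ) = (m:ℤ) + 1 := by push_cast; ring
      rw [hcast, hscheme (m:ℤ) (by positivity) j]
      have ha := hm (j+1)
      have hb := hm j
      have hc := hm (j-1)
      have hfa := hf_range _ ha
      have hfc := hf_range _ hc
      exact lf_step R V α (Δt/Δx) (ρ (m:ℤ) (j+1)) (ρ (m:ℤ) j) (ρ (m:ℤ) (j-1))
        (f (ρ (m:ℤ) (j+1))) (f (ρ (m:ℤ) (j-1)))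
        (Vel ((m:ℤ) - (nτ:ℤ)) (j+1)) (Vel ((m:ℤ) - (nτ:ℤ)) (j-1)) nf'
        hR ha.1 ha.2 hb.1 hb.2 hc.1 hc.2 hfa.1 hfa.2 hfc.1
        (hf_bound _ hc) hW1.1 hW1.2 hW2.1 hW2.2 hlam hla hnf_nonneg hVα hVRα
end

section
/- Weak maximum principle for the Hilliges–Weidlich scheme: Suppose the initial grid datum satisfies ρ⁰_j ∈ [0,R] for all j ∈ ℤ, and suppose the CFL condition λ ≤ 1/(V(1 + R‖f'‖)) holds, where ‖f'‖ is the sup norm of f' on [0,R]. Then the values produced by the delayed Hilliges–Weidlich scheme satisfy ρⁿ_j ∈ [0,R] for all j ∈ ℤ and all n ∈ ℕ. -/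
open MeasureTheory Finset Filter Topology

set_option maxHeartbeats 1000000

theorem stmt_4
    (R V L τ : ℝ) (hR : 0 < R) (hV : 0 < V) (hL : 0 < L) (hτ : 0 < τ)
    (v : ℝ → ℝ)
    (hv : ContDiffOn ℝ 2 v (Set.Icc 0 R))
    (hv_range : ∀ x ∈ Set.Icc (0:ℝ) R, v x ∈ Set.Icc 0 V)
    (hv_mono : ∀ x ∈ Set.Icc (0:ℝ) R, deriv v x ≤ 0)
    (hv0 : v 0 = V) (hvR : v R = 0)
    (f : ℝ → ℝ)
    (hf : ContDiffOn ℝ 1 f (Set.Icc 0 R))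
    (hf_range : ∀ x ∈ Set.Icc (0:ℝ) R, f x ∈ Set.Icc 0 1)
    (hf_mono : ∀ x ∈ Set.Icc (0:ℝ) R, deriv f x ≤ 0)
    (hf0 : f 0 = 1) (hfR : f R = 0)
    (hf_hi : ∀ x : ℝ, R < x → f x = 0) (hf_lo : ∀ x : ℝ, x < 0 → f x = 1)
    (ω : ℝ → ℝ)
    (hω : ContDiffOn ℝ 1 ω (Set.Icc 0 L))
    (hω_nonneg : ∀ x ∈ Set.Icc (0:ℝ) L, 0 ≤ ω x)
    (hω_mono : ∀ x ∈ Set.Icc (0:ℝ) L, ∀ y ∈ Set.Icc (0:ℝ) L, x ≤ y → ω y ≤ ω x)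
    (hω_int : ∫ s in (0:ℝ)..L, ω s = 1)
    (hω_ext : ∀ x : ℝ, L < x → ω x = 0)
    (Δx Δt : ℝ) (hΔx : 0 < Δx) (hΔt : 0 < Δt)
    (N nτ : ℕ) (hN : L = N * Δx) (hnτ : τ = nτ * Δt)
    (ωd : ℕ → ℝ)
    (hωd : ∀ k : ℕ, ωd k = (1/Δx) * ∫ x in ((k:ℝ) * Δx)..(((k:ℝ)+1) * Δx), ω x)
    (ρ : ℤ → ℤ → ℝ) (ρ0 : ℤ → ℝ)
    (Vel : ℤ → ℤ → ℝ)
    (hVel : ∀ (n j : ℤ), Vel n j = v (Δx * ∑ k ∈ Finset.range N, ωd k * ρ n (j + (k:ℤ))))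
    (hinit : ∀ n : ℤ, -(nτ:ℤ) ≤ n → n ≤ 0 → ∀ j : ℤ, ρ n j = ρ0 j)
    (hscheme : ∀ n : ℤ, 0 ≤ n → ∀ j : ℤ,
      ρ (n+1) j = ρ n j
        - (Δt/Δx) *
            (ρ n j * f (ρ n (j+1)) * Vel (n - (nτ:ℤ)) (j+1)
             - ρ n (j-1) * f (ρ n j) * Vel (n - (nτ:ℤ)) j))
    (nf' : ℝ) (hnf' : nf' = sSup ((fun x => |deriv f x|) '' Set.Icc (0:ℝ) R))
    (hρ0 : ∀ j : ℤ, ρ0 j ∈ Set.Icc 0 R)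
    (hCFL : Δt/Δx ≤ 1/(V * (1 + R * nf'))) :
    ∀ (n : ℕ) (j : ℤ), ρ (n:ℤ) j ∈ Set.Icc 0 R := by
  have hlam : 0 < Δt/Δx := div_pos hΔt hΔx
  have hnf0 : 0 ≤ nf' := by
    rw [hnf']
    apply Real.sSup_nonneg
    rintro y ⟨x, -, rfl⟩
    exact abs_nonneg _
  have hD : 0 < V * (1 + R * nf') := by
    have : 0 < 1 + R * nf' := by nlinarith
    positivity
  have hCFL' : (Δt/Δx) * (V * (1 + R * nf')) ≤ 1 := (le_div_iff₀ hD).mp hCFL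
  have hlamV : (Δt/Δx) * V ≤ 1 := by
    nlinarith [mul_nonneg (mul_nonneg hlam.le hV.le) (mul_nonneg hR.le hnf0)]
  -- derivative bound
  have hfd : DifferentiableOn ℝ f (Set.Icc 0 R) := hf.differentiableOn one_ne_zero
  have hderivc : ContinuousOn (derivWithin f (Set.Icc 0 R)) (Set.Icc 0 R) :=
    hf.continuousOn_derivWithin (uniqueDiffOn_Icc hR) le_rfl
  have hS_bdd : BddAbove ((fun x => |deriv f x|) '' Set.Icc (0:ℝ) R) := by
    obtain ⟨M, hM⟩ := IsCompact.bddAbove_image isCompact_Icc hderivc.abs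
    refine ⟨max M (max (|deriv f 0|) (|deriv f R|)), ?_⟩
    rintro y ⟨x, hx, rfl⟩
    rcases eq_or_lt_of_le hx.1 with h0 | h0
    · rw [← h0]
      exact le_trans (le_max_left _ _) (le_max_right _ _)
    rcases eq_or_lt_of_le hx.2 with hRx | hRx
    · rw [hRx]
      exact le_trans (le_max_right _ _) (le_max_right _ _)
    · have hx' : Set.Icc (0:ℝ) R ∈ 𝓝 x := Icc_mem_nhds h0 hRx
      have heq : deriv f x = derivWithin f (Set.Icc 0 R) x :=
        (derivWithin_of_mem_nhds hx').symm
      simp only [heq]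
      exact le_trans (hM ⟨x, hx, rfl⟩) (le_max_left _ _)
  have hnf'_ge : ∀ x ∈ Set.Ioo (0:ℝ) R, |deriv f x| ≤ nf' := by
    intro x hx
    rw [hnf']
    exact le_csSup hS_bdd ⟨x, Set.Ioo_subset_Icc_self hx, rfl⟩
  have hLip : ∀ a ∈ Set.Icc (0:ℝ) R, f a ≤ nf' * (R - a) := by
    intro a ha
    rcases eq_or_lt_of_le ha.2 with h | h
    · rw [h, hfR]; simp
    · have hcont : ContinuousOn f (Set.Icc a R) :=
        hf.continuousOn.mono (Set.Icc_subset_Icc ha.1 le_rfl)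
      have hdiff : ∀ x ∈ Set.Ioo a R, HasDerivAt f (deriv f x) x := by
        intro x hx
        have hx0 : (0:ℝ) < x := lt_of_le_of_lt ha.1 hx.1
        have hx' : x ∈ Set.Icc (0:ℝ) R := ⟨hx0.le, hx.2.le⟩
        have hmem : Set.Icc (0:ℝ) R ∈ 𝓝 x := Icc_mem_nhds hx0 hx.2
        exact ((hfd x hx').differentiableAt hmem).hasDerivAt
      obtain ⟨c, hc, hc'⟩ := exists_hasDerivAt_eq_slope f (deriv f) h hcont hdiff
      have hb := hnf'_ge c ⟨lt_of_le_of_lt ha.1 hc.1, hc.2⟩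
      rw [hfR] at hc'
      have hRa : 0 < R - a := by linarith
      have h1 : f a = -(deriv f c) * (R - a) := by
        field_simp at hc'
        linarith [hc']
      nlinarith [neg_abs_le (deriv f c), abs_nonneg (deriv f c)]
  -- the weights
  have hInt : ∀ k, k < N →
      IntervalIntegrable ω volume ((fun i:ℕ => (i:ℝ)*Δx) k) ((fun i:ℕ => (i:ℝ)*Δx) (k+1)) := by
    intro k hk
    apply ContinuousOn.intervalIntegrable
    apply hω.continuousOn.mono
    rw [Set.uIcc_of_le (by push_cast; nlinarith)]
    intro x hx
    have hk1 : ((k:ℝ)+1) ≤ (N:ℝ) := by exact_mod_cast hk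
    constructor
    · have : (0:ℝ) ≤ (k:ℝ)*Δx := by positivity
      have := hx.1; simp only at this; push_cast at this; linarith
    · have := hx.2; simp only at this; push_cast at this
      rw [hN]; nlinarith
  have hsum1 : Δx * ∑ k ∈ Finset.range N, ωd k = 1 := by
    have h := intervalIntegral.sum_integral_adjacent_intervals (μ := volume) (f := ω) hInt
    push_cast at h
    rw [Finset.mul_sum]
    have hcg : ∀ k ∈ Finset.range N, Δx * ωd k = ∫ x in ((k:ℝ)*Δx)..(((k:ℝ)+1)*Δx), ω x := by
      intro k _
      rw [hωd]
      field_simp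
    rw [Finset.sum_congr rfl hcg, h]
    rw [show ((0:ℝ)*Δx) = 0 by ring, ← hN]
    exact hω_int
  have hωd_nn : ∀ k ∈ Finset.range N, 0 ≤ ωd k := by
    intro k hk
    rw [hωd]
    apply mul_nonneg (by positivity)
    apply intervalIntegral.integral_nonneg (by nlinarith)
    intro u hu
    apply hω_nonneg
    have hk1 : ((k:ℝ)+1) ≤ (N:ℝ) := by exact_mod_cast Finset.mem_range.mp hk
    have h0 : (0:ℝ) ≤ (k:ℝ)*Δx := by positivity
    refine ⟨le_trans h0 hu.1, le_trans hu.2 ?_⟩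
    rw [hN]; nlinarith
  -- velocity bound
  have hVelb : ∀ (m : ℤ) (j : ℤ), (∀ i : ℤ, ρ m i ∈ Set.Icc 0 R) →
      Vel m j ∈ Set.Icc 0 V := by
    intro m j hm
    rw [hVel]
    apply hv_range
    rw [Set.mem_Icc]
    constructor
    · apply mul_nonneg hΔx.le
      apply Finset.sum_nonneg
      intro k hk
      exact mul_nonneg (hωd_nn k hk) (hm _).1
    · calc Δx * ∑ k ∈ Finset.range N, ωd k * ρ m (j + (k:ℤ))
          ≤ Δx * ∑ k ∈ Finset.range N, ωd k * R := by
            apply mul_le_mul_of_nonneg_left _ hΔx.le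
            apply Finset.sum_le_sum
            intro k hk
            exact mul_le_mul_of_nonneg_left (hm _).2 (hωd_nn k hk)
        _ = R := by rw [← Finset.sum_mul, ← mul_assoc, hsum1, one_mul]
  -- main induction
  intro n
  induction n using Nat.strong_induction_on with
  | _ n IH =>
    rcases n with _ | m
    · intro j
      rw [Nat.cast_zero, hinit 0 (by omega) le_rfl]
      exact hρ0 j
    · intro j
      have hm : ∀ i, ρ (m:ℤ) i ∈ Set.Icc 0 R := fun i => IH m (Nat.lt_succ_self m) i
      have hdel : ∀ i, ρ ((m:ℤ) - (nτ:ℤ)) i ∈ Set.Icc 0 R := by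
        intro i
        by_cases hc : nτ ≤ m
        · have hcast : ((m:ℤ) - (nτ:ℤ)) = ((m - nτ : ℕ) : ℤ) := by omega
          rw [hcast]
          exact IH (m - nτ) (by omega) i
        · rw [hinit ((m:ℤ) - (nτ:ℤ)) (by omega) (by omega) i]
          exact hρ0 i
      have hW : Vel ((m:ℤ) - (nτ:ℤ)) j ∈ Set.Icc 0 V := hVelb _ _ hdel
      have hW' : Vel ((m:ℤ) - (nτ:ℤ)) (j+1) ∈ Set.Icc 0 V := hVelb _ _ hdel
      have hsch := hscheme (m:ℤ) (by omega) j
      have hcast : ((m+1:ℕ):ℤ) = (m:ℤ)+1 := by push_cast; ring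
      rw [hcast, hsch]
      have ha := hm (j-1); have hb := hm j; have hc := hm (j+1)
      have hfb := hf_range _ hb; have hfc := hf_range _ hc
      have hlipb := hLip _ hb
      set a := ρ (m:ℤ) (j-1)
      set b := ρ (m:ℤ) j
      set c := ρ (m:ℤ) (j+1)
      set W := Vel ((m:ℤ) - (nτ:ℤ)) j
      set W' := Vel ((m:ℤ) - (nτ:ℤ)) (j+1)
      have hRb : 0 ≤ R - b := by linarith [hb.2]
      rw [Set.mem_Icc]
      constructor
      · have h1 : f c * W' ≤ V := by nlinarith [hfc.1, hfc.2, hW'.1, hW'.2]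
        have h2 : (Δt/Δx) * (f c * W') ≤ 1 :=
          le_trans (mul_le_mul_of_nonneg_left h1 hlam.le) hlamV
        have h3 : 0 ≤ b * (1 - (Δt/Δx) * (f c * W')) :=
          mul_nonneg hb.1 (by linarith)
        have h4 : 0 ≤ (Δt/Δx) * (a * f b * W) :=
          mul_nonneg hlam.le (mul_nonneg (mul_nonneg ha.1 hfb.1) hW.1)
        nlinarith [h3, h4]
      · have k1 : a * f b * W ≤ R * f b * W :=
          mul_le_mul_of_nonneg_right (mul_le_mul_of_nonneg_right ha.2 hfb.1) hW.1
        have k2 : R * f b * W ≤ R * f b * V := by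
          apply mul_le_mul_of_nonneg_left hW.2 (mul_nonneg hR.le hfb.1)
        have k3 : R * f b * V ≤ R * (nf' * (R - b)) * V := by
          apply mul_le_mul_of_nonneg_right _ hV.le
          exact mul_le_mul_of_nonneg_left hlipb hR.le
        have k4 : (Δt/Δx) * (a * f b * W) ≤ (Δt/Δx) * (R * (nf' * (R - b)) * V) :=
          mul_le_mul_of_nonneg_left (le_trans k1 (le_trans k2 k3)) hlam.le
        have k5 : 0 ≤ (Δt/Δx) * (b * f c * W') :=
          mul_nonneg hlam.le (mul_nonneg (mul_nonneg hb.1 hfc.1) hW'.1)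
        have k6 : 0 ≤ (R - b) * (1 - (Δt/Δx) * (V * (1 + R * nf'))) :=
          mul_nonneg hRb (by linarith)
        have k7 : 0 ≤ ((Δt/Δx) * V) * (R - b) :=
          mul_nonneg (mul_nonneg hlam.le hV.le) hRb
        nlinarith [k4, k5, k6, k7]
end

section
/- Discrete Lipschitz bound on the discretized nonlocal velocity: Let (σ_j)_{j∈ℤ} be any family of grid values with σ_j ∈ [0,R] for all j ∈ ℤ, and set W_j = v(Δx·Σ_{k=0}^{N−1} ωᵏ σ_{j+k}). Then for every j ∈ ℤ one has |W_{j+1} − W_j| ≤ 2‖v'‖‖ω‖RΔx, where ‖v'‖ is the sup norm of v' on [0,R] and ‖ω‖ = ω(0) is the sup norm of ω. -/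
open MeasureTheory Finset Filter
open scoped Topology

theorem stmt_5
    (R V L : ℝ) (hR : 0 < R) (hV : 0 < V) (hL : 0 < L)
    (v : ℝ → ℝ)
    (hv : ContDiffOn ℝ 2 v (Set.Icc 0 R))
    (hv_range : ∀ x ∈ Set.Icc (0:ℝ) R, v x ∈ Set.Icc 0 V)
    (hv_mono : ∀ x ∈ Set.Icc (0:ℝ) R, deriv v x ≤ 0)
    (hv0 : v 0 = V) (hvR : v R = 0)
    (ω : ℝ → ℝ)
    (hω : ContDiffOn ℝ 1 ω (Set.Icc 0 L))
    (hω_nonneg : ∀ x ∈ Set.Icc (0:ℝ) L, 0 ≤ ω x)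
    (hω_mono : ∀ x ∈ Set.Icc (0:ℝ) L, ∀ y ∈ Set.Icc (0:ℝ) L, x ≤ y → ω y ≤ ω x)
    (hω_int : ∫ s in (0:ℝ)..L, ω s = 1)
    (hω_ext : ∀ x : ℝ, L < x → ω x = 0)
    (Δx : ℝ) (hΔx : 0 < Δx)
    (N : ℕ) (hN : L = N * Δx)
    (ωd : ℕ → ℝ)
    (hωd : ∀ k : ℕ, ωd k = (1/Δx) * ∫ x in ((k:ℝ) * Δx)..(((k:ℝ)+1) * Δx), ω x)
    (nv' : ℝ) (hnv' : nv' = sSup ((fun x => |deriv v x|) '' Set.Icc (0:ℝ) R))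
    (σ : ℤ → ℝ) (hσ : ∀ j : ℤ, σ j ∈ Set.Icc 0 R)
    (W : ℤ → ℝ)
    (hW : ∀ j : ℤ, W j = v (Δx * ∑ k ∈ Finset.range N, ωd k * σ (j + (k:ℤ)))) :
    ∀ j : ℤ, |W (j+1) - W j| ≤ 2 * nv' * ω 0 * R * Δx := by
  -- basic facts about ω on [0, ∞)
  have hnn' : ∀ x : ℝ, 0 ≤ x → 0 ≤ ω x := by
    intro x hx
    rcases le_or_gt x L with h | h
    · exact hω_nonneg x ⟨hx, h⟩
    · rw [hω_ext x h]
  have hanti : AntitoneOn ω (Set.Ici (0:ℝ)) := by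
    intro x hx y hy hxy
    rcases le_or_gt y L with h | h
    · exact hω_mono x ⟨hx, hxy.trans h⟩ y ⟨hy, h⟩ hxy
    · rw [hω_ext y h]; exact hnn' x hx
  have hInt : ∀ a b : ℝ, 0 ≤ a → 0 ≤ b → IntervalIntegrable ω volume a b := by
    intro a b ha hb
    refine (hanti.mono ?_).intervalIntegrable
    intro z hz
    rcases le_total a b with h | h
    · rw [Set.uIcc_of_le h] at hz; exact le_trans ha hz.1
    · rw [Set.uIcc_of_ge h] at hz; exact le_trans hb hz.1
  have hk_nonneg : ∀ k : ℕ, (0:ℝ) ≤ (k:ℝ) * Δx := fun k =>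
    mul_nonneg (Nat.cast_nonneg k) hΔx.le
  have hk_nonneg' : ∀ k : ℕ, (0:ℝ) ≤ ((k:ℝ)+1) * Δx := fun k =>
    mul_nonneg (by positivity) hΔx.le
  -- ωd nonneg
  have hωd_nonneg : ∀ k : ℕ, 0 ≤ ωd k := by
    intro k
    rw [hωd k]
    refine mul_nonneg (by positivity) ?_
    refine intervalIntegral.integral_nonneg (by nlinarith [hk_nonneg k]) ?_
    intro u hu
    exact hnn' u (le_trans (hk_nonneg k) hu.1)
  -- ωd antitone
  have hωd_step : ∀ k : ℕ, ωd (k+1) ≤ ωd k := by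
    intro k
    rw [hωd k, hωd (k+1)]
    have hab : (k:ℝ) * Δx ≤ ((k:ℝ)+1) * Δx := by nlinarith
    have hshift : (∫ x in ((k:ℝ) * Δx)..(((k:ℝ)+1) * Δx), ω (x + Δx))
        = ∫ x in (((k:ℕ)+1:ℕ):ℝ) * Δx..((((k:ℕ)+1:ℕ):ℝ)+1) * Δx, ω x := by
      rw [intervalIntegral.integral_comp_add_right]
      push_cast
      ring_nf
    have hint1 : IntervalIntegrable (fun x => ω (x + Δx)) volume ((k:ℝ) * Δx) (((k:ℝ)+1) * Δx) := by
      have := (hInt ((k:ℝ) * Δx + Δx) (((k:ℝ)+1) * Δx + Δx)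
        (by nlinarith [hk_nonneg k]) (by nlinarith [hk_nonneg' k])).comp_add_right Δx
      simpa using this
    have hmono : (∫ x in ((k:ℝ) * Δx)..(((k:ℝ)+1) * Δx), ω (x + Δx))
        ≤ ∫ x in ((k:ℝ) * Δx)..(((k:ℝ)+1) * Δx), ω x := by
      refine intervalIntegral.integral_mono_on hab hint1
        (hInt _ _ (hk_nonneg k) (hk_nonneg' k)) ?_
      intro u hu
      have hu0 : (0:ℝ) ≤ u := le_trans (hk_nonneg k) hu.1
      exact hanti hu0 (by linarith [hΔx.le] : (0:ℝ) ≤ u + Δx)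
        (le_add_of_nonneg_right hΔx.le)
    rw [← hshift]
    have h1 : (0:ℝ) ≤ 1/Δx := by positivity
    exact mul_le_mul_of_nonneg_left hmono h1
  have hωd_anti : ∀ m n : ℕ, m ≤ n → ωd n ≤ ωd m := by
    intro m n hmn
    induction n with
    | zero => simp_all
    | succ n ih =>
      rcases Nat.lt_or_ge m (n+1) with h | h
      · exact le_trans (hωd_step n) (ih (Nat.lt_succ_iff.mp h))
      · have : m = n + 1 := le_antisymm hmn h
        rw [this]
  -- ωd 0 ≤ ω 0
  have hωd0 : ωd 0 ≤ ω 0 := by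
    rw [hωd 0]
    have hconst : (∫ x in ((0:ℕ):ℝ) * Δx..(((0:ℕ):ℝ)+1) * Δx, ω x)
        ≤ ∫ x in ((0:ℕ):ℝ) * Δx..(((0:ℕ):ℝ)+1) * Δx, ω 0 := by
      refine intervalIntegral.integral_mono_on (by simp; positivity)
        (hInt _ _ (by simp) (by simp; positivity)) intervalIntegrable_const ?_
      intro u hu
      exact hanti (Set.mem_Ici.mpr le_rfl) (by simpa using hu.1) (by simpa using hu.1)
    have h2 : (∫ x in ((0:ℕ):ℝ) * Δx..(((0:ℕ):ℝ)+1) * Δx, (ω 0 : ℝ)) = Δx * ω 0 := by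
      simp [mul_comm]
    calc (1/Δx) * ∫ x in ((0:ℕ):ℝ) * Δx..(((0:ℕ):ℝ)+1) * Δx, ω x
        ≤ (1/Δx) * (Δx * ω 0) := by
          refine mul_le_mul_of_nonneg_left ?_ (by positivity)
          rw [← h2]; exact hconst
      _ = ω 0 := by field_simp
  -- ωd N = 0
  have hωdN : ωd N = 0 := by
    rw [hωd N]
    have hz : (∫ x in ((N:ℝ) * Δx)..(((N:ℝ)+1) * Δx), ω x) = 0 := by
      rw [intervalIntegral.integral_of_le (by nlinarith)]
      refine setIntegral_eq_zero_of_forall_eq_zero ?_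
      intro x hx
      exact hω_ext x (by rw [hN]; exact hx.1)
    rw [hz, mul_zero]
  -- the sum of the weights is 1/Δx
  have hsum1 : Δx * ∑ k ∈ Finset.range N, ωd k = 1 := by
    have hadj : ∑ k ∈ Finset.range N, (∫ x in ((k:ℝ) * Δx)..(((k:ℝ)+1) * Δx), ω x)
        = ∫ x in (0:ℝ)..(N:ℝ) * Δx, ω x := by
      have := intervalIntegral.sum_integral_adjacent_intervals
        (f := ω) (μ := volume) (a := fun k : ℕ => (k:ℝ) * Δx) (n := N)
        (fun k _ => by
          have := hInt ((k:ℝ) * Δx) (((k+1:ℕ):ℝ) * Δx) (hk_nonneg k) (hk_nonneg (k+1))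
          simpa using this)
      simpa using this
    have : ∑ k ∈ Finset.range N, ωd k = (1/Δx) * 1 := by
      calc ∑ k ∈ Finset.range N, ωd k
          = (1/Δx) * ∑ k ∈ Finset.range N, (∫ x in ((k:ℝ) * Δx)..(((k:ℝ)+1) * Δx), ω x) := by
            rw [Finset.mul_sum]; exact Finset.sum_congr rfl fun k _ => hωd k
        _ = (1/Δx) * 1 := by rw [hadj, ← hN, hω_int]
    rw [this]; field_simp
  -- deriv bound facts
  set g : ℝ → ℝ := derivWithin v (Set.Icc 0 R) with hg
  have huniq : UniqueDiffOn ℝ (Set.Icc (0:ℝ) R) := uniqueDiffOn_Icc hR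
  have hgc : ContinuousOn g (Set.Icc 0 R) :=
    hv.continuousOn_derivWithin huniq (by norm_num)
  have hgi : ∀ x ∈ Set.Ioo (0:ℝ) R, g x = deriv v x := by
    intro x hx
    exact derivWithin_of_mem_nhds (Icc_mem_nhds hx.1 hx.2)
  -- the image set is bounded above
  have hbdd : BddAbove ((fun x => |deriv v x|) '' Set.Icc (0:ℝ) R) := by
    obtain ⟨M, hM⟩ := (isCompact_Icc (a := (0:ℝ)) (b := R)).exists_bound_of_continuousOn hgc
    refine ⟨max M (max |deriv v 0| |deriv v R|), ?_⟩
    rintro y ⟨x, hx, rfl⟩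
    rcases eq_or_lt_of_le hx.1 with h0 | h0
    · rw [← h0]; exact le_max_of_le_right (le_max_left _ _)
    rcases eq_or_lt_of_le hx.2 with hRx | hRx
    · rw [hRx]; exact le_max_of_le_right (le_max_right _ _)
    · have := hM x hx
      rw [hgi x ⟨h0, hRx⟩] at this
      exact le_max_of_le_left (by simpa using this)
  have hderiv_le : ∀ x ∈ Set.Icc (0:ℝ) R, |deriv v x| ≤ nv' := by
    intro x hx
    rw [hnv']
    exact le_csSup hbdd ⟨x, hx, rfl⟩
  have hnv'_nonneg : 0 ≤ nv' :=
    le_trans (abs_nonneg _) (hderiv_le 0 ⟨le_rfl, hR.le⟩)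
  -- |g| ≤ nv' on all of Icc, by continuity
  have hgb : ∀ x ∈ Set.Icc (0:ℝ) R, |g x| ≤ nv' := by
    intro x hx
    have hne : (nhdsWithin x (Set.Ioo (0:ℝ) R)).NeBot :=
      mem_closure_iff_nhdsWithin_neBot.mp (by rw [closure_Ioo hR.ne]; exact hx)
    have htend : Tendsto (fun y => |g y|) (𝓝[Set.Ioo (0:ℝ) R] x) (𝓝 |g x|) :=
      ((hgc x hx).mono Set.Ioo_subset_Icc_self).abs
    refine le_of_tendsto htend ?_
    filter_upwards [self_mem_nhdsWithin] with y hy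
    rw [hgi y hy]
    exact hderiv_le y (Set.Ioo_subset_Icc_self hy)
  -- Lipschitz bound on v via MVT
  have hlip : ∀ a ∈ Set.Icc (0:ℝ) R, ∀ b ∈ Set.Icc (0:ℝ) R, |v b - v a| ≤ nv' * |b - a| := by
    intro a ha b hb
    have := (convex_Icc (0:ℝ) R).norm_image_sub_le_of_norm_hasDerivWithin_le
      (f := v) (f' := g)
      (fun x hx => ((hv.differentiableOn (by norm_num) x hx).hasDerivWithinAt))
      (fun x hx => by simpa using hgb x hx) ha hb
    simpa [Real.norm_eq_abs] using this
  -- main estimate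
  intro j
  set τ : ℕ → ℝ := fun k => σ (j + (k:ℤ)) with hτ
  have hτ_mem : ∀ k : ℕ, τ k ∈ Set.Icc (0:ℝ) R := fun k => hσ _
  set S0 : ℝ := ∑ k ∈ Finset.range N, ωd k * τ k with hS0
  set S1 : ℝ := ∑ k ∈ Finset.range N, ωd k * τ (k+1) with hS1
  have hWj : W j = v (Δx * S0) := by
    rw [hW j]
  have hWj1 : W (j+1) = v (Δx * S1) := by
    rw [hW (j+1)]
    congr 1
    congr 1
    refine Finset.sum_congr rfl fun k _ => ?_
    have : j + 1 + (k:ℤ) = j + ((k+1:ℕ):ℤ) := by push_cast; ring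
    rw [this]
  -- membership of the arguments in [0,R]
  have harg : ∀ (τ' : ℕ → ℝ), (∀ k, τ' k ∈ Set.Icc (0:ℝ) R) →
      Δx * (∑ k ∈ Finset.range N, ωd k * τ' k) ∈ Set.Icc (0:ℝ) R := by
    intro τ' hτ'
    constructor
    · refine mul_nonneg hΔx.le (Finset.sum_nonneg fun k _ =>
        mul_nonneg (hωd_nonneg k) (hτ' k).1)
    · have : ∑ k ∈ Finset.range N, ωd k * τ' k ≤ ∑ k ∈ Finset.range N, ωd k * R :=
        Finset.sum_le_sum fun k _ => mul_le_mul_of_nonneg_left (hτ' k).2 (hωd_nonneg k)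
      calc Δx * (∑ k ∈ Finset.range N, ωd k * τ' k)
          ≤ Δx * ∑ k ∈ Finset.range N, ωd k * R := by
            exact mul_le_mul_of_nonneg_left this hΔx.le
        _ = (Δx * ∑ k ∈ Finset.range N, ωd k) * R := by
            rw [← Finset.sum_mul]; ring
        _ = R := by rw [hsum1, one_mul]
  have hA : Δx * S0 ∈ Set.Icc (0:ℝ) R := harg τ hτ_mem
  have hB : Δx * S1 ∈ Set.Icc (0:ℝ) R := harg (fun k => τ (k+1)) (fun k => hτ_mem (k+1))
  -- summation by parts identity
  have hkey : S1 - S0 = (∑ k ∈ Finset.range N, (ωd k - ωd (k+1)) * τ (k+1))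
      - ωd 0 * τ 0 + ωd N * τ N := by
    have h1 : ∑ k ∈ Finset.range (N+1), ωd k * τ k
        = (∑ k ∈ Finset.range N, ωd (k+1) * τ (k+1)) + ωd 0 * τ 0 :=
      Finset.sum_range_succ' _ N
    have h2 : ∑ k ∈ Finset.range (N+1), ωd k * τ k
        = (∑ k ∈ Finset.range N, ωd k * τ k) + ωd N * τ N :=
      Finset.sum_range_succ _ N
    have h3 : ∑ k ∈ Finset.range N, (ωd k - ωd (k+1)) * τ (k+1)
        = S1 - ∑ k ∈ Finset.range N, ωd (k+1) * τ (k+1) := by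
      rw [hS1, ← Finset.sum_sub_distrib]
      exact Finset.sum_congr rfl fun k _ => by ring
    rw [hS0]
    linarith [h1, h2, h3]
  -- bound |S1 - S0|
  have hbound : |S1 - S0| ≤ 2 * ω 0 * R := by
    rw [hkey, hωdN, zero_mul, add_zero]
    have hterm : ∀ k ∈ Finset.range N, |(ωd k - ωd (k+1)) * τ (k+1)|
        ≤ (ωd k - ωd (k+1)) * R := by
      intro k _
      rw [abs_mul, abs_of_nonneg (sub_nonneg.mpr (hωd_step k))]
      refine mul_le_mul_of_nonneg_left ?_ (sub_nonneg.mpr (hωd_step k))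
      rw [abs_of_nonneg (hτ_mem (k+1)).1]
      exact (hτ_mem (k+1)).2
    have hsum_abs : |∑ k ∈ Finset.range N, (ωd k - ωd (k+1)) * τ (k+1)|
        ≤ ∑ k ∈ Finset.range N, (ωd k - ωd (k+1)) * R :=
      le_trans (Finset.abs_sum_le_sum_abs _ _) (Finset.sum_le_sum hterm)
    have htel : ∑ k ∈ Finset.range N, (ωd k - ωd (k+1)) * R = (ωd 0 - ωd N) * R := by
      rw [← Finset.sum_mul, Finset.sum_range_sub' ωd N]
    have h0 : |ωd 0 * τ 0| ≤ ωd 0 * R := by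
      rw [abs_mul, abs_of_nonneg (hωd_nonneg 0)]
      refine mul_le_mul_of_nonneg_left ?_ (hωd_nonneg 0)
      rw [abs_of_nonneg (hτ_mem 0).1]
      exact (hτ_mem 0).2
    calc |(∑ k ∈ Finset.range N, (ωd k - ωd (k+1)) * τ (k+1)) - ωd 0 * τ 0|
        ≤ |∑ k ∈ Finset.range N, (ωd k - ωd (k+1)) * τ (k+1)| + |ωd 0 * τ 0| :=
          abs_sub _ _
      _ ≤ (ωd 0 - ωd N) * R + ωd 0 * R := by
          rw [← htel]; exact add_le_add hsum_abs h0
      _ = (2 * ωd 0 - ωd N) * R := by ring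
      _ ≤ 2 * ω 0 * R := by
          rw [hωdN]
          nlinarith [hωd0, hR.le]
  -- conclude
  rw [hWj, hWj1]
  calc |v (Δx * S1) - v (Δx * S0)| ≤ nv' * |Δx * S1 - Δx * S0| :=
        hlip (Δx * S0) hA (Δx * S1) hB
    _ = nv' * (Δx * |S1 - S0|) := by rw [← mul_sub, abs_mul, abs_of_pos hΔx]
    _ ≤ nv' * (Δx * (2 * ω 0 * R)) := by
        refine mul_le_mul_of_nonneg_left ?_ hnv'_nonneg
        exact mul_le_mul_of_nonneg_left hbound hΔx.le
    _ = 2 * nv' * ω 0 * R * Δx := by ring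
end

section
/- Discrete delayed Gronwall-type lemma: Let h ∈ ℕ with h ≥ 1, Δt > 0, and G, H ≥ 0, and set M = max{G, H}. Let (aₙ)_{n ≥ −h} be a family of nonnegative real numbers such that a_{−h} = a_{−h+1} = … = a₀ and a_{n+1} ≤ (1 + Δt·G)·aₙ + Δt·H·a_{n−h} for all n ≥ 0. Then for every k with 0 ≤ k ≤ h: a_k ≤ [(1 + Δt·G)^k + (1 + Δt·M)^k − 1]·a₀. -/
open MeasureTheory Finset Filter

/-- The gap is `(m - g) * ((1 + m) ^ k - 1) + (m - e)`. -/
lemma mul_pow_add_pow_sub_one_add_le {g m e : ℝ} (hgm : g ≤ m) (hem : e ≤ m) (hm : 0 ≤ m)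
    (k : ℕ) :
    (1 + g) * ((1 + g) ^ k + (1 + m) ^ k - 1) + e ≤ (1 + g) ^ (k + 1) + (1 + m) ^ (k + 1) - 1 := by
  have hpow : 1 ≤ (1 + m) ^ k := one_le_pow₀ (by linarith)
  rw [pow_succ, pow_succ]
  nlinarith [mul_nonneg (sub_nonneg.2 hgm) (sub_nonneg.2 hpow)]

lemma le_pow_add_pow_sub_one_mul_of_le_mul_add {u : ℕ → ℝ} {g m e : ℝ} {n : ℕ}
    (hg : 0 ≤ 1 + g) (hgm : g ≤ m) (hem : e ≤ m) (hm : 0 ≤ m) (hu₀ : 0 ≤ u 0)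
    (hu : ∀ k < n, u (k + 1) ≤ (1 + g) * u k + e * u 0) :
    ∀ k ≤ n, u k ≤ ((1 + g) ^ k + (1 + m) ^ k - 1) * u 0 := by
  intro k hk
  induction k with
  | zero => simp
  | succ k ih =>
    calc u (k + 1) ≤ (1 + g) * u k + e * u 0 := hu k hk
      _ ≤ (1 + g) * (((1 + g) ^ k + (1 + m) ^ k - 1) * u 0) + e * u 0 := by
        gcongr; exact ih (by omega)
      _ = ((1 + g) * ((1 + g) ^ k + (1 + m) ^ k - 1) + e) * u 0 := by ring
      _ ≤ ((1 + g) ^ (k + 1) + (1 + m) ^ (k + 1) - 1) * u 0 := by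
        gcongr; exact mul_pow_add_pow_sub_one_add_le hgm hem hm k

theorem stmt_7_general
    (hdel : ℕ)
    (Δt : ℝ) (hΔt : 0 < Δt)
    (G H M : ℝ) (hG : 0 ≤ G) (hM : M = max G H)
    (a : ℤ → ℝ)
    (hnonneg : ∀ n : ℤ, -(hdel:ℤ) ≤ n → 0 ≤ a n)
    (hconst : ∀ n : ℤ, -(hdel:ℤ) ≤ n → n ≤ 0 → a n = a 0)
    (hrec : ∀ n : ℤ, 0 ≤ n → a (n+1) ≤ (1 + Δt * G) * a n + Δt * H * a (n - (hdel:ℤ))) :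
    ∀ k : ℕ, k ≤ hdel →
      a (k:ℤ) ≤ ((1 + Δt * G) ^ k + (1 + Δt * M) ^ k - 1) * a 0 := by
  have hGM : Δt * G ≤ Δt * M := by gcongr; exact hM ▸ le_max_left G H
  have hHM : Δt * H ≤ Δt * M := by gcongr; exact hM ▸ le_max_right G H
  -- Up to time `hdel` the delayed term still reads the constant initial history.
  have hstep : ∀ k < hdel, a ((k + 1 : ℕ) : ℤ) ≤ (1 + Δt * G) * a k + Δt * H * a 0 := by
    intro k hk
    rw [← hconst (k - hdel) (by omega) (by omega)]
    exact_mod_cast hrec k k.cast_nonneg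
  exact le_pow_add_pow_sub_one_mul_of_le_mul_add (u := fun k : ℕ => a k) (by positivity) hGM hHM
    ((mul_nonneg hΔt.le hG).trans hGM) (hnonneg 0 (by omega)) hstep

theorem stmt_7
    (hdel : ℕ) (hhdel : 1 ≤ hdel)
    (Δt : ℝ) (hΔt : 0 < Δt)
    (G H M : ℝ) (hG : 0 ≤ G) (hH : 0 ≤ H) (hM : M = max G H)
    (a : ℤ → ℝ)
    (hnonneg : ∀ n : ℤ, -(hdel:ℤ) ≤ n → 0 ≤ a n)
    (hconst : ∀ n : ℤ, -(hdel:ℤ) ≤ n → n ≤ 0 → a n = a 0)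
    (hrec : ∀ n : ℤ, 0 ≤ n → a (n+1) ≤ (1 + Δt * G) * a n + Δt * H * a (n - (hdel:ℤ))) :
    ∀ k : ℕ, k ≤ hdel →
      a (k:ℤ) ≤ ((1 + Δt * G) ^ k + (1 + Δt * M) ^ k - 1) * a 0 :=
  stmt_7_general hdel Δt hΔt G H M hG hM a hnonneg hconst hrec
end

section
/- Limit of the BV growth constant as the delay tends to zero: For every M > 0 and T > 0, the limit as τ → 0⁺ of (2e^{M(T − ⌊T/τ⌋τ)} − 1)·(2e^{Mτ} − 1)^{⌊T/τ⌋} equals e^{2MT}, where ⌊·⌋ denotes the floor function. -/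
open MeasureTheory Finset Filter Topology

lemma real_exp_int_mul_aux (x : ℝ) (n : ℤ) : Real.exp ((n:ℝ) * x) = Real.exp x ^ n := by
  rw [← Real.rpow_intCast (Real.exp x) n, Real.rpow_def_of_pos (Real.exp_pos x),
    Real.log_exp, mul_comm]

theorem stmt_9 (M T : ℝ) (hM : 0 < M) (hT : 0 < T) :
    Tendsto
      (fun τ : ℝ =>
        (2 * Real.exp (M * (T - (⌊T/τ⌋ : ℝ) * τ)) - 1)
          * (2 * Real.exp (M * τ) - 1) ^ ⌊T/τ⌋)
      (nhdsWithin 0 (Set.Ioi 0)) (nhds (Real.exp (2 * M * T))) := by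
  set g : ℝ → ℝ := fun x => Real.log (2 * Real.exp (M * x) - 1) with hgdef
  have hg0 : g 0 = 0 := by norm_num [hgdef]
  have hderiv : HasDerivAt g (2 * M) 0 := by
    have h1 : HasDerivAt (fun x : ℝ => M * x) M 0 := by
      simpa using (hasDerivAt_id (0:ℝ)).const_mul M
    have h2 := (h1.exp.const_mul 2).sub_const 1
    have h3 := h2.log (by norm_num)
    convert h3 using 1
    norm_num
  have hrlo : ∀ τ : ℝ, 0 < τ → 0 ≤ T - (⌊T/τ⌋:ℝ) * τ := by
    intro τ hτ
    have h := mul_le_mul_of_nonneg_right (Int.floor_le (T/τ)) hτ.le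
    rw [div_mul_cancel₀ T hτ.ne'] at h
    linarith
  have hrhi : ∀ τ : ℝ, 0 < τ → T - (⌊T/τ⌋:ℝ) * τ ≤ τ := by
    intro τ hτ
    have h := mul_le_mul_of_nonneg_right (Int.lt_floor_add_one (T/τ)).le hτ.le
    rw [div_mul_cancel₀ T hτ.ne'] at h
    nlinarith
  have hr_to : Tendsto (fun τ : ℝ => T - (⌊T/τ⌋:ℝ) * τ) (𝓝[>] (0:ℝ)) (𝓝 0) := by
    apply tendsto_of_tendsto_of_tendsto_of_le_of_le' tendsto_const_nhds
      (tendsto_id.mono_left nhdsWithin_le_nhds)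
    · filter_upwards [self_mem_nhdsWithin] with τ hτ using hrlo τ hτ
    · filter_upwards [self_mem_nhdsWithin] with τ hτ using hrhi τ hτ
  have hgr : Tendsto (fun τ : ℝ => g (T - (⌊T/τ⌋:ℝ) * τ)) (𝓝[>] (0:ℝ)) (𝓝 0) := by
    have := hderiv.continuousAt.tendsto.comp hr_to
    rwa [hg0] at this
  have hslope : Tendsto (fun τ : ℝ => g τ / τ) (𝓝[>] (0:ℝ)) (𝓝 (2*M)) := by
    have h := (hasDerivAt_iff_tendsto_slope.1 hderiv).mono_left
      (nhdsWithin_mono 0 (fun x hx => (by exact ne_of_gt hx : x ≠ 0)))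
    apply h.congr
    intro τ
    simp [slope_def_field, hg0]
  have hnt : Tendsto (fun τ : ℝ => (⌊T/τ⌋:ℝ) * τ) (𝓝[>] (0:ℝ)) (𝓝 T) := by
    have heq : (fun τ : ℝ => (⌊T/τ⌋:ℝ) * τ) = fun τ => T - (T - (⌊T/τ⌋:ℝ) * τ) := by
      funext τ; ring
    rw [heq]
    simpa using (tendsto_const_nhds (x := T) (f := 𝓝[>] (0:ℝ))).sub hr_to
  have hmain : Tendsto (fun τ : ℝ => (⌊T/τ⌋:ℝ) * g τ) (𝓝[>] (0:ℝ)) (𝓝 (2*M*T)) := by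
    have h := hnt.mul hslope
    rw [show T * (2*M) = 2*M*T by ring] at h
    apply h.congr'
    filter_upwards [self_mem_nhdsWithin] with τ (hτ : 0 < τ)
    field_simp
  have hL : Tendsto (fun τ : ℝ => g (T - (⌊T/τ⌋:ℝ) * τ) + (⌊T/τ⌋:ℝ) * g τ)
      (𝓝[>] (0:ℝ)) (𝓝 (2*M*T)) := by
    simpa using hgr.add hmain
  have hexp := (Real.continuous_exp.continuousAt.tendsto.comp hL)
  apply hexp.congr'
  filter_upwards [self_mem_nhdsWithin] with τ (hτ : 0 < τ)
  have hr := hrlo τ hτ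
  have hpos1 : (0:ℝ) < 2 * Real.exp (M * (T - (⌊T/τ⌋:ℝ) * τ)) - 1 := by
    have : (1:ℝ) ≤ Real.exp (M * (T - (⌊T/τ⌋:ℝ) * τ)) :=
      Real.one_le_exp (by positivity)
    linarith
  have hpos2 : (0:ℝ) < 2 * Real.exp (M * τ) - 1 := by
    have : (1:ℝ) ≤ Real.exp (M * τ) := Real.one_le_exp (by positivity)
    linarith
  simp only [Function.comp]
  rw [Real.exp_add, real_exp_int_mul_aux, hgdef]
  rw [Real.exp_log hpos1, Real.exp_log hpos2]
end

section
/- One-step L¹ time-difference estimate for the Lax–Friedrichs scheme: Suppose the initial grid datum satisfies ρ⁰_j ∈ [0,R] for all j ∈ ℤ, and suppose α ≥ V(1 + R‖f'‖) and λ ≤ 1/(α + V(1 + R‖f'‖)). Then for every n ∈ ℕ and j ∈ ℤ the values produced by the delayed Lax–Friedrichs scheme satisfy |ρ^{n+1}_j − ρⁿ_j| ≤ (λ/2)·[α + (1 + R‖f'‖)V]·(|ρⁿ_{j+1} − ρⁿ_j| + |ρⁿ_j − ρⁿ_{j−1}|) + (λ/2)·R‖v'‖Δx·[ω⁰·(|ρ^{n−h}_{j−1}|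 + |ρ^{n−h}_j|) + Σ_{k=1}^{N}(ω^{k−1} − ωᵏ)·(|ρ^{n−h}_{j+k−1}| + |ρ^{n−h}_{j+k}|)], where ‖v'‖, ‖f'‖ are the sup norms of v', f' on [0,R]. -/
open MeasureTheory Finset Filter

lemma aux_sup_deriv {R : ℝ} (hR : 0 < R) {f : ℝ → ℝ} (hf : ContDiffOn ℝ 1 f (Set.Icc 0 R)) :
    0 ≤ sSup ((fun x => |deriv f x|) '' Set.Icc (0:ℝ) R) ∧
    ∀ x ∈ Set.Icc (0:ℝ) R, |derivWithin f (Set.Icc 0 R) x|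
      ≤ sSup ((fun x => |deriv f x|) '' Set.Icc (0:ℝ) R) := by
  set s := Set.Icc (0:ℝ) R with hs
  have hus : UniqueDiffOn ℝ s := uniqueDiffOn_Icc hR
  set g := derivWithin f s with hg
  have hgc : ContinuousOn (fun x => |g x|) s :=
    (hf.continuousOn_derivWithin hus le_rfl).abs
  have hne : s.Nonempty := ⟨0, by constructor <;> [rfl; exact hR.le]⟩
  obtain ⟨x₀, hx₀, hmax⟩ := isCompact_Icc.exists_isMaxOn hne hgc
  have hb : ∀ x ∈ s, |deriv f x| ≤ max (|g x₀|) 0 := by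
    intro x hx
    by_cases hd : DifferentiableAt ℝ f x
    · have : g x = deriv f x := hd.hasDerivAt.hasDerivWithinAt.derivWithin (hus x hx)
      rw [← this]
      exact le_max_of_le_left (hmax hx)
    · rw [deriv_zero_of_not_differentiableAt hd]; simp
  have hbdd : BddAbove ((fun x => |deriv f x|) '' s) := by
    refine ⟨max (|g x₀|) 0, ?_⟩
    rintro y ⟨x, hx, rfl⟩; exact hb x hx
  have h0s : (0:ℝ) ∈ s := ⟨le_refl _, hR.le⟩
  have hsup0 : 0 ≤ sSup ((fun x => |deriv f x|) '' s) :=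
    le_trans (abs_nonneg _) (le_csSup hbdd ⟨0, h0s, rfl⟩)
  refine ⟨hsup0, ?_⟩
  have hint : ∀ x ∈ Set.Ioo (0:ℝ) R, |g x| ≤ sSup ((fun x => |deriv f x|) '' s) := by
    intro x hx
    have hxs : x ∈ s := Set.Ioo_subset_Icc_self hx
    have hnh : s ∈ nhds x := Icc_mem_nhds hx.1 hx.2
    have : g x = deriv f x := derivWithin_of_mem_nhds hnh
    rw [this]
    exact le_csSup hbdd ⟨x, hxs, rfl⟩
  intro x hx
  have hcl : x ∈ closure (Set.Ioo (0:ℝ) R) := by rwa [closure_Ioo hR.ne]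
  have hnb : (nhdsWithin x (Set.Ioo (0:ℝ) R)).NeBot := mem_closure_iff_nhdsWithin_neBot.mp hcl
  have htd : Tendsto (fun y => |g y|) (nhdsWithin x (Set.Ioo (0:ℝ) R)) (nhds (|g x|)) :=
    (hgc.continuousWithinAt hx).mono Set.Ioo_subset_Icc_self
  exact le_of_tendsto htd (eventually_nhdsWithin_of_forall hint)

lemma aux_lip {R C : ℝ} {f : ℝ → ℝ} (hdf : DifferentiableOn ℝ f (Set.Icc 0 R))
    (hb : ∀ x ∈ Set.Icc (0:ℝ) R, |derivWithin f (Set.Icc 0 R) x| ≤ C) :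
    ∀ a ∈ Set.Icc (0:ℝ) R, ∀ b ∈ Set.Icc (0:ℝ) R, |f b - f a| ≤ C * |b - a| := by
  intro a ha b hb'
  have := Convex.norm_image_sub_le_of_norm_derivWithin_le hdf
    (fun x hx => by rw [Real.norm_eq_abs]; exact hb x hx) (convex_Icc _ _) ha hb'
  simpa [Real.norm_eq_abs] using this

lemma aux_abel (r : ℤ → ℝ) (w : ℕ → ℝ) (j : ℤ) : ∀ N : ℕ,
    (∑ k ∈ Finset.range N, w k * r (j+1+(k:ℤ)))
      - (∑ k ∈ Finset.range N, w k * r (j-1+(k:ℤ)))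
    = (∑ k ∈ Finset.Icc 1 N, (w (k-1) - w k) * (r (j+(k:ℤ)-1) + r (j+(k:ℤ))))
      - w 0 * (r (j-1) + r j) + w N * (r (j+(N:ℤ)-1) + r (j+(N:ℤ))) := by
  intro N
  induction N with
  | zero => simp
  | succ n ih =>
    rw [Finset.sum_range_succ, Finset.sum_range_succ, Finset.sum_Icc_succ_top (by omega)]
    have e1 : ((n+1 : ℕ) : ℤ) = (n:ℤ)+1 := by push_cast; ring
    have e2 : ((n+1 : ℕ) - 1 : ℕ) = n := by omega
    rw [e1, e2]
    have e3 : j + ((n:ℤ)+1) - 1 = j + (n:ℤ) := by ring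
    have e4 : j + 1 + (n:ℤ) = j + ((n:ℤ)+1) := by ring
    have e5 : j - 1 + (n:ℤ) = j + (n:ℤ) - 1 := by ring
    rw [e3, e4, e5]
    linarith [ih]

lemma aux_omega {L : ℝ}
    {ω : ℝ → ℝ}
    (hω : ContDiffOn ℝ 1 ω (Set.Icc 0 L))
    (hω_nonneg : ∀ x ∈ Set.Icc (0:ℝ) L, 0 ≤ ω x)
    (hω_mono : ∀ x ∈ Set.Icc (0:ℝ) L, ∀ y ∈ Set.Icc (0:ℝ) L, x ≤ y → ω y ≤ ω x)
    (hω_int : ∫ s in (0:ℝ)..L, ω s = 1)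
    (hω_ext : ∀ x : ℝ, L < x → ω x = 0)
    {Δx : ℝ} (hΔx : 0 < Δx)
    {N : ℕ} (hN : L = N * Δx)
    {ωd : ℕ → ℝ}
    (hωd : ∀ k : ℕ, ωd k = (1/Δx) * ∫ x in ((k:ℝ) * Δx)..(((k:ℝ)+1) * Δx), ω x) :
    (∀ k : ℕ, 0 ≤ ωd k) ∧ ωd N = 0 ∧ (Δx * ∑ k ∈ Finset.range N, ωd k = 1) ∧
      (∀ k : ℕ, 1 ≤ k → k ≤ N → ωd k ≤ ωd (k-1)) := by
  have hωc : ContinuousOn ω (Set.Icc 0 L) := hω.continuousOn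
  have hωc : ContinuousOn ω (Set.Icc 0 L) := hω.continuousOn
  have hω_all : ∀ x : ℝ, 0 ≤ x → 0 ≤ ω x := by
    intro x hx
    rcases le_or_gt x L with h | h
    · exact hω_nonneg x ⟨hx, h⟩
    · rw [hω_ext x h]
  have hωd_nonneg : ∀ k : ℕ, 0 ≤ ωd k := by
    intro k
    rw [hωd k]
    apply mul_nonneg (by positivity)
    apply intervalIntegral.integral_nonneg
    · nlinarith [Nat.cast_nonneg (α := ℝ) k]
    · intro u hu
      exact hω_all u (le_trans (by positivity) hu.1)
  have hInt : ∀ a b : ℝ, 0 ≤ a → a ≤ b → b ≤ L → IntervalIntegrable ω MeasureTheory.volume a b := by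
    intro a b ha hab hb
    exact (hωc.mono (by rw [Set.uIcc_of_le hab]; exact Set.Icc_subset_Icc ha hb)).intervalIntegrable
  have hconst : ∀ a b c : ℝ, (∫ _ in a..b, c) = (b - a) * c := by
    intro a b c; rw [intervalIntegral.integral_const]; simp [smul_eq_mul]
  have hωdN : ωd N = 0 := by
    rw [hωd N]
    have : (∫ x in ((N:ℝ) * Δx)..(((N:ℝ)+1) * Δx), ω x)
        = ∫ x in ((N:ℝ) * Δx)..(((N:ℝ)+1) * Δx), (0:ℝ) := by
      apply intervalIntegral.integral_congr_ae
      filter_upwards with x hx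
      rw [Set.uIoc_of_le (by nlinarith)] at hx
      exact hω_ext x (by rw [hN]; exact hx.1)
    rw [this]; simp
  have hωd_sum : Δx * ∑ k ∈ Finset.range N, ωd k = 1 := by
    have hkey : ∀ k : ℕ, Δx * ωd k = ∫ x in ((k:ℝ) * Δx)..(((k:ℝ)+1) * Δx), ω x := by
      intro k; rw [hωd k]; field_simp
    rw [Finset.mul_sum]
    have hadj := intervalIntegral.sum_integral_adjacent_intervals
      (a := fun k : ℕ => (k:ℝ) * Δx) (f := ω) (μ := MeasureTheory.volume) (n := N)
      (by
        intro k hk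
        apply hInt
        · positivity
        · push_cast; nlinarith
        · rw [hN]; push_cast
          nlinarith [(by exact_mod_cast Nat.succ_le_of_lt hk : ((k:ℝ)+1) ≤ (N:ℝ))])
    calc ∑ k ∈ Finset.range N, Δx * ωd k
        = ∑ k ∈ Finset.range N, ∫ x in ((k:ℝ) * Δx)..((((k:ℕ)+1 : ℕ):ℝ) * Δx), ω x := by
          apply Finset.sum_congr rfl; intro k _; rw [hkey k]; push_cast; ring_nf
      _ = ∫ x in ((0:ℕ):ℝ)*Δx..((N:ℝ)*Δx), ω x := hadj
      _ = 1 := by push_cast; rw [zero_mul, ← hN, hω_int]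
  have hωd_mono : ∀ k : ℕ, 1 ≤ k → k ≤ N → ωd k ≤ ωd (k-1) := by
    intro k hk1 hkN
    rcases eq_or_lt_of_le hkN with rfl | hlt
    · rw [hωdN]; exact hωd_nonneg _
    · have hkL : (k:ℝ) * Δx ≤ L := by
        rw [hN]; have : (k:ℝ) ≤ (N:ℝ) := by exact_mod_cast hkN
        nlinarith
      have hkL' : ((k:ℝ)+1) * Δx ≤ L := by
        rw [hN]; have : (k:ℝ)+1 ≤ (N:ℝ) := by exact_mod_cast Nat.succ_le_of_lt hlt
        nlinarith
      have hk0 : (0:ℝ) ≤ ((k:ℝ)-1) * Δx := by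
        have : (1:ℝ) ≤ (k:ℝ) := by exact_mod_cast hk1
        nlinarith
      have hkpos : (0:ℝ) ≤ (k:ℝ) * Δx := by positivity
      have hkmem : (k:ℝ) * Δx ∈ Set.Icc (0:ℝ) L := ⟨hkpos, hkL⟩
      have h1 : (∫ x in ((k:ℝ) * Δx)..(((k:ℝ)+1) * Δx), ω x) ≤ Δx * ω ((k:ℝ)*Δx) := by
        have hmono := intervalIntegral.integral_mono_on
          (a := (k:ℝ)*Δx) (b := ((k:ℝ)+1)*Δx) (f := ω) (g := fun _ => ω ((k:ℝ)*Δx))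
          (μ := MeasureTheory.volume)
          (by nlinarith) (hInt _ _ hkpos (by nlinarith) hkL') intervalIntegrable_const
          (by
            intro x hx
            exact hω_mono _ hkmem x ⟨le_trans hkpos hx.1, le_trans hx.2 hkL'⟩ hx.1)
        rw [hconst] at hmono
        calc (∫ x in ((k:ℝ) * Δx)..(((k:ℝ)+1) * Δx), ω x)
            ≤ (((k:ℝ)+1)*Δx - (k:ℝ)*Δx) * ω ((k:ℝ)*Δx) := hmono
          _ = Δx * ω ((k:ℝ)*Δx) := by ring
      have h2 : Δx * ω ((k:ℝ)*Δx) ≤ ∫ x in (((k:ℝ)-1) * Δx)..((k:ℝ) * Δx), ω x := by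
        have hmono := intervalIntegral.integral_mono_on
          (a := ((k:ℝ)-1)*Δx) (b := (k:ℝ)*Δx) (f := fun _ => ω ((k:ℝ)*Δx)) (g := ω)
          (μ := MeasureTheory.volume)
          (by nlinarith) intervalIntegrable_const (hInt _ _ hk0 (by nlinarith) hkL)
          (by
            intro x hx
            exact hω_mono x ⟨le_trans hk0 hx.1, le_trans hx.2 hkL⟩ _ hkmem hx.2)
        rw [hconst] at hmono
        calc Δx * ω ((k:ℝ)*Δx)
            = ((k:ℝ)*Δx - ((k:ℝ)-1)*Δx) * ω ((k:ℝ)*Δx) := by ring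
          _ ≤ _ := hmono
      have hidx : ((k - 1 : ℕ) : ℝ) = (k:ℝ) - 1 := by
        have : 1 ≤ k := hk1; push_cast [this]; ring
      rw [hωd k, hωd (k-1), hidx]
      have h3 : ((k:ℝ) - 1 + 1) * Δx = (k:ℝ) * Δx := by ring
      rw [h3]
      have h4 := le_trans h1 h2
      have hpos : (0:ℝ) < 1/Δx := by positivity
      nlinarith [h4]
  exact ⟨hωd_nonneg, hωdN, hωd_sum, hωd_mono⟩

set_option maxHeartbeats 1000000 in
theorem stmt_18
    (R V L τ : ℝ) (hR : 0 < R) (hV : 0 < V) (hL : 0 < L) (hτ : 0 < τ)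
    (v : ℝ → ℝ)
    (hv : ContDiffOn ℝ 2 v (Set.Icc 0 R))
    (hv_range : ∀ x ∈ Set.Icc (0:ℝ) R, v x ∈ Set.Icc 0 V)
    (hv_mono : ∀ x ∈ Set.Icc (0:ℝ) R, deriv v x ≤ 0)
    (hv0 : v 0 = V) (hvR : v R = 0)
    (f : ℝ → ℝ)
    (hf : ContDiffOn ℝ 1 f (Set.Icc 0 R))
    (hf_range : ∀ x ∈ Set.Icc (0:ℝ) R, f x ∈ Set.Icc 0 1)
    (hf_mono : ∀ x ∈ Set.Icc (0:ℝ) R, deriv f x ≤ 0)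
    (hf0 : f 0 = 1) (hfR : f R = 0)
    (hf_hi : ∀ x : ℝ, R < x → f x = 0) (hf_lo : ∀ x : ℝ, x < 0 → f x = 1)
    (ω : ℝ → ℝ)
    (hω : ContDiffOn ℝ 1 ω (Set.Icc 0 L))
    (hω_nonneg : ∀ x ∈ Set.Icc (0:ℝ) L, 0 ≤ ω x)
    (hω_mono : ∀ x ∈ Set.Icc (0:ℝ) L, ∀ y ∈ Set.Icc (0:ℝ) L, x ≤ y → ω y ≤ ω x)
    (hω_int : ∫ s in (0:ℝ)..L, ω s = 1)
    (hω_ext : ∀ x : ℝ, L < x → ω x = 0)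
    (Δx Δt : ℝ) (hΔx : 0 < Δx) (hΔt : 0 < Δt)
    (N nτ : ℕ) (hN : L = N * Δx) (hnτ : τ = nτ * Δt)
    (ωd : ℕ → ℝ)
    (hωd : ∀ k : ℕ, ωd k = (1/Δx) * ∫ x in ((k:ℝ) * Δx)..(((k:ℝ)+1) * Δx), ω x)
    (ρ : ℤ → ℤ → ℝ) (ρ0 : ℤ → ℝ)
    (Vel : ℤ → ℤ → ℝ)
    (hVel : ∀ (n j : ℤ), Vel n j = v (Δx * ∑ k ∈ Finset.range N, ωd k * ρ n (j + (k:ℤ))))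
    (hinit : ∀ n : ℤ, -(nτ:ℤ) ≤ n → n ≤ 0 → ∀ j : ℤ, ρ n j = ρ0 j)
    (α : ℝ) (hα : 0 < α)
    (hscheme : ∀ n : ℤ, 0 ≤ n → ∀ j : ℤ,
      ρ (n+1) j = ρ n j
        + (Δt/Δx) * α / 2 * (ρ n (j+1) - 2 * ρ n j + ρ n (j-1))
        - (Δt/Δx) / 2 *
            (ρ n (j+1) * f (ρ n (j+1)) * Vel (n - (nτ:ℤ)) (j+1)
             - ρ n (j-1) * f (ρ n (j-1)) * Vel (n - (nτ:ℤ)) (j-1)))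
    (nf' : ℝ) (hnf' : nf' = sSup ((fun x => |deriv f x|) '' Set.Icc (0:ℝ) R))
    (nv' : ℝ) (hnv' : nv' = sSup ((fun x => |deriv v x|) '' Set.Icc (0:ℝ) R))
    (hρ0 : ∀ j : ℤ, ρ0 j ∈ Set.Icc 0 R)
    (hCFL1 : V * (1 + R * nf') ≤ α)
    (hCFL2 : Δt/Δx ≤ 1/(α + V * (1 + R * nf'))) :
    ∀ (n : ℕ) (j : ℤ),
      |ρ ((n:ℤ)+1) j - ρ (n:ℤ) j| ≤
        (Δt/Δx) / 2 * (α + (1 + R * nf') * V)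
            * (|ρ (n:ℤ) (j+1) - ρ (n:ℤ) j| + |ρ (n:ℤ) j - ρ (n:ℤ) (j-1)|)
        + (Δt/Δx) / 2 * R * nv' * Δx
            * (ωd 0 * (|ρ ((n:ℤ) - (nτ:ℤ)) (j-1)| + |ρ ((n:ℤ) - (nτ:ℤ)) j|)
               + ∑ k ∈ Finset.Icc 1 N, (ωd (k-1) - ωd k)
                  * (|ρ ((n:ℤ) - (nτ:ℤ)) (j + (k:ℤ) - 1)|
                     + |ρ ((n:ℤ) - (nτ:ℤ)) (j + (k:ℤ))|)) := by

  -- basic positivity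
  have hlam : 0 ≤ Δt/Δx := by positivity
  have hs := aux_sup_deriv hR hf
  have hnf0 : 0 ≤ nf' := by rw [hnf']; exact hs.1
  have hfb : ∀ x ∈ Set.Icc (0:ℝ) R, |derivWithin f (Set.Icc 0 R) x| ≤ nf' := by
    rw [hnf']; exact hs.2
  have hv1 : ContDiffOn ℝ 1 v (Set.Icc 0 R) := hv.of_le (by norm_num)
  have hsv := aux_sup_deriv hR hv1
  have hnv0 : 0 ≤ nv' := by rw [hnv']; exact hsv.1
  have hvb : ∀ x ∈ Set.Icc (0:ℝ) R, |derivWithin v (Set.Icc 0 R) x| ≤ nv' := by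
    rw [hnv']; exact hsv.2
  set K := 1 + R * nf' with hKdef
  have hK0 : 0 ≤ K := by positivity
  have hvlip : ∀ a ∈ Set.Icc (0:ℝ) R, ∀ b ∈ Set.Icc (0:ℝ) R, |v b - v a| ≤ nv' * |b - a| :=
    aux_lip (hv1.differentiableOn one_ne_zero) hvb
  -- Lipschitz bound for F x = x * f x
  have hFdiff : DifferentiableOn ℝ (fun x => x * f x) (Set.Icc 0 R) :=
    (differentiable_id.differentiableOn).mul (hf.differentiableOn one_ne_zero)
  have hFb : ∀ x ∈ Set.Icc (0:ℝ) R, |derivWithin (fun y => y * f y) (Set.Icc 0 R) x| ≤ K := by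
    intro x hx
    have hder : HasDerivWithinAt (fun y => y * f y)
        (1 * f x + x * derivWithin f (Set.Icc 0 R) x) (Set.Icc 0 R) x :=
      (hasDerivWithinAt_id x _).mul ((hf.differentiableOn one_ne_zero x hx).hasDerivWithinAt)
    rw [hder.derivWithin (uniqueDiffOn_Icc hR x hx)]
    have hfx := hf_range x hx
    have hdx := hfb x hx
    have habs := abs_nonneg (derivWithin f (Set.Icc 0 R) x)
    have h1 : |1 * f x + x * derivWithin f (Set.Icc 0 R) x|
        ≤ |f x| + x * |derivWithin f (Set.Icc 0 R) x| := by
      rw [one_mul]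
      refine le_trans (abs_add_le _ _) ?_
      rw [abs_mul, abs_of_nonneg hx.1]
    have h2 : |f x| ≤ 1 := by rw [abs_of_nonneg hfx.1]; exact hfx.2
    have h3 : x * |derivWithin f (Set.Icc 0 R) x| ≤ R * nf' := by
      apply mul_le_mul hx.2 hdx habs hR.le
    calc |1 * f x + x * derivWithin f (Set.Icc 0 R) x|
        ≤ |f x| + x * |derivWithin f (Set.Icc 0 R) x| := h1
      _ ≤ 1 + R * nf' := add_le_add h2 h3
  have hFlip : ∀ a ∈ Set.Icc (0:ℝ) R, ∀ b ∈ Set.Icc (0:ℝ) R,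
      |b * f b - a * f a| ≤ K * |b - a| := aux_lip hFdiff hFb
  obtain ⟨hωd_nonneg, hωdN, hωd_sum, hωd_mono⟩ :=
    aux_omega hω hω_nonneg hω_mono hω_int hω_ext hΔx hN hωd
  -- average membership
  have hAmem : ∀ t : ℤ, (∀ j' : ℤ, ρ t j' ∈ Set.Icc 0 R) → ∀ j' : ℤ,
      (Δx * ∑ k ∈ Finset.range N, ωd k * ρ t (j' + (k:ℤ))) ∈ Set.Icc (0:ℝ) R := by
    intro t ht j'
    constructor
    · apply mul_nonneg hΔx.le
      apply Finset.sum_nonneg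
      intro k _
      exact mul_nonneg (hωd_nonneg k) (ht _).1
    · calc Δx * ∑ k ∈ Finset.range N, ωd k * ρ t (j' + (k:ℤ))
          ≤ Δx * ∑ k ∈ Finset.range N, ωd k * R := by
            apply mul_le_mul_of_nonneg_left _ hΔx.le
            apply Finset.sum_le_sum
            intro k _
            exact mul_le_mul_of_nonneg_left (ht _).2 (hωd_nonneg k)
        _ = (Δx * ∑ k ∈ Finset.range N, ωd k) * R := by rw [← Finset.sum_mul]; ring
        _ = R := by rw [hωd_sum, one_mul]
  have hVelmem : ∀ t : ℤ, (∀ j' : ℤ, ρ t j' ∈ Set.Icc 0 R) → ∀ j' : ℤ,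
      Vel t j' ∈ Set.Icc (0:ℝ) V := by
    intro t ht j'
    rw [hVel]
    exact hv_range _ (hAmem t ht j')
  -- CFL consequences
  have hKVα : K * V ≤ α := by rw [mul_comm]; exact hCFL1
  have hVK0 : 0 ≤ V * K := mul_nonneg hV.le hK0
  have hαKV : 0 < α + V * K := by linarith
  have hlamVK : 0 ≤ (Δt/Δx) * (V * K) := mul_nonneg hlam hVK0
  have hlam1 : (Δt/Δx) * α ≤ 1 := by
    have h := (le_div_iff₀ hαKV).mp hCFL2
    linarith [h, hlamVK]
  -- maximum principle
  have hmemN : ∀ n : ℕ, ∀ j : ℤ, ρ (n:ℤ) j ∈ Set.Icc (0:ℝ) R := by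
    intro n
    induction n using Nat.strong_induction_on with
    | _ n IH =>
      match n with
      | 0 =>
        intro j
        rw [Nat.cast_zero, hinit 0 (by omega) le_rfl j]
        exact hρ0 j
      | Nat.succ m =>
        intro j
        have hprev : ∀ j' : ℤ, ρ ((m:ℤ) - (nτ:ℤ)) j' ∈ Set.Icc (0:ℝ) R := by
          intro j'
          rcases le_or_gt (m:ℤ) (nτ:ℤ) with h | h
          · rw [hinit _ (by omega) (by omega) j']; exact hρ0 j'
          · have hc : ((m - nτ : ℕ) : ℤ) = (m:ℤ) - (nτ:ℤ) := by
              have : nτ ≤ m := by exact_mod_cast h.le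
              push_cast [this]; ring
            rw [← hc]
            exact IH (m - nτ) (by omega) j'
        have hsch := hscheme (m:ℤ) (Int.natCast_nonneg m) j
        set a := ρ (m:ℤ) (j+1) with ha
        set b := ρ (m:ℤ) j with hb
        set c := ρ (m:ℤ) (j-1) with hc
        have haM : a ∈ Set.Icc (0:ℝ) R := IH m (Nat.lt_succ_self m) (j+1)
        have hbM : b ∈ Set.Icc (0:ℝ) R := IH m (Nat.lt_succ_self m) j
        have hcM : c ∈ Set.Icc (0:ℝ) R := IH m (Nat.lt_succ_self m) (j-1)
        set Wp := Vel ((m:ℤ) - (nτ:ℤ)) (j+1) with hWp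
        set Wm := Vel ((m:ℤ) - (nτ:ℤ)) (j-1) with hWm
        have hWpM : Wp ∈ Set.Icc (0:ℝ) V := hVelmem _ hprev _
        have hWmM : Wm ∈ Set.Icc (0:ℝ) V := hVelmem _ hprev _
        have hrw : ρ ((m:ℤ)+1) j
            = (1 - (Δt/Δx)*α)*b + (Δt/Δx)/2*(α*a - a*f a*Wp) + (Δt/Δx)/2*(α*c + c*f c*Wm) := by
          rw [hsch]; ring
        -- bounds on the monotone pieces
        have hFa : |a * f a - 0 * f 0| ≤ K * |a - 0| := hFlip 0 ⟨le_rfl, hR.le⟩ a haM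
        have hFa' : |a * f a| ≤ K * a := by
          rw [zero_mul, sub_zero, sub_zero, abs_of_nonneg haM.1] at hFa; exact hFa
        have hFc : |c * f c - 0 * f 0| ≤ K * |c - 0| := hFlip 0 ⟨le_rfl, hR.le⟩ c hcM
        have hFc' : |c * f c| ≤ K * c := by
          rw [zero_mul, sub_zero, sub_zero, abs_of_nonneg hcM.1] at hFc; exact hFc
        have hFcR : |R * f R - c * f c| ≤ K * |R - c| := hFlip c hcM R ⟨hR.le, le_rfl⟩
        have hFcR' : |c * f c| ≤ K * (R - c) := by
          rw [hfR, mul_zero, zero_sub, abs_neg, abs_of_nonneg (sub_nonneg.mpr hcM.2)] at hFcR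
          exact hFcR
        have hfa0 : 0 ≤ a * f a := mul_nonneg haM.1 (hf_range a haM).1
        have hfc0 : 0 ≤ c * f c := mul_nonneg hcM.1 (hf_range c hcM).1
        have hg1l : 0 ≤ α*a - a*f a*Wp := by
          have t1 : a*f a*Wp ≤ |a*f a| *Wp := mul_le_mul_of_nonneg_right (le_abs_self _) hWpM.1
          have t2 : |a*f a| *Wp ≤ K*a*Wp := mul_le_mul_of_nonneg_right hFa' hWpM.1
          have t3 : K*a*Wp ≤ K*a*V :=
            mul_le_mul_of_nonneg_left hWpM.2 (mul_nonneg hK0 haM.1)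
          have t4 : K*V*a ≤ α*a := mul_le_mul_of_nonneg_right hKVα haM.1
          linarith [t1, t2, t3, t4]
        have hg1u : α*a - a*f a*Wp ≤ α*R := by
          have t1 : 0 ≤ a*f a*Wp := mul_nonneg hfa0 hWpM.1
          have t2 : α*a ≤ α*R := mul_le_mul_of_nonneg_left haM.2 hα.le
          linarith
        have hg2l : 0 ≤ α*c + c*f c*Wm :=
          add_nonneg (mul_nonneg hα.le hcM.1) (mul_nonneg hfc0 hWmM.1)
        have hg2u : α*c + c*f c*Wm ≤ α*R := by
          have t1 : c*f c*Wm ≤ |c*f c| *Wm := mul_le_mul_of_nonneg_right (le_abs_self _) hWmM.1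
          have t2 : |c*f c| *Wm ≤ (K*(R-c))*Wm := mul_le_mul_of_nonneg_right hFcR' hWmM.1
          have t3 : (K*(R-c))*Wm ≤ (K*(R-c))*V :=
            mul_le_mul_of_nonneg_left hWmM.2 (mul_nonneg hK0 (sub_nonneg.mpr hcM.2))
          have t4 : K*V*(R-c) ≤ α*(R-c) :=
            mul_le_mul_of_nonneg_right hKVα (sub_nonneg.mpr hcM.2)
          linarith [t1, t2, t3, t4]
        have hcast : ((m+1 : ℕ) : ℤ) = (m:ℤ) + 1 := by push_cast; ring
        rw [show (Nat.succ m) = m + 1 from rfl, hcast, hrw]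
        have hl2 : (0:ℝ) ≤ (Δt/Δx)/2 := by positivity
        constructor
        · have u1 : 0 ≤ (1 - (Δt/Δx)*α)*b := mul_nonneg (by linarith) hbM.1
          have u2 : 0 ≤ (Δt/Δx)/2*(α*a - a*f a*Wp) := mul_nonneg hl2 hg1l
          have u3 : 0 ≤ (Δt/Δx)/2*(α*c + c*f c*Wm) := mul_nonneg hl2 hg2l
          linarith
        · have u1 : (1 - (Δt/Δx)*α)*b ≤ (1 - (Δt/Δx)*α)*R :=
            mul_le_mul_of_nonneg_left hbM.2 (by linarith)
          have u2 : (Δt/Δx)/2*(α*a - a*f a*Wp) ≤ (Δt/Δx)/2*(α*R) :=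
            mul_le_mul_of_nonneg_left hg1u hl2
          have u3 : (Δt/Δx)/2*(α*c + c*f c*Wm) ≤ (Δt/Δx)/2*(α*R) :=
            mul_le_mul_of_nonneg_left hg2u hl2
          linarith [u1, u2, u3]
  -- membership for all admissible times
  have hmem : ∀ t : ℤ, -(nτ:ℤ) ≤ t → ∀ j : ℤ, ρ t j ∈ Set.Icc (0:ℝ) R := by
    intro t ht j
    rcases le_or_gt 0 t with h | h
    · obtain ⟨m, rfl⟩ := Int.eq_ofNat_of_zero_le h
      exact hmemN m j
    · rw [hinit t ht h.le j]; exact hρ0 j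
  -- main estimate
  intro n j
  have hprev : ∀ j' : ℤ, ρ ((n:ℤ) - (nτ:ℤ)) j' ∈ Set.Icc (0:ℝ) R := by
    intro j'
    exact hmem _ (by omega) j'
  have hsch := hscheme (n:ℤ) (Int.natCast_nonneg n) j
  set a := ρ (n:ℤ) (j+1) with ha
  set b := ρ (n:ℤ) j with hb
  set c := ρ (n:ℤ) (j-1) with hc
  have haM : a ∈ Set.Icc (0:ℝ) R := hmemN n (j+1)
  have hbM : b ∈ Set.Icc (0:ℝ) R := hmemN n j
  have hcM : c ∈ Set.Icc (0:ℝ) R := hmemN n (j-1)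
  set tm := (n:ℤ) - (nτ:ℤ) with htm
  set Wp := Vel tm (j+1) with hWpd
  set Wm := Vel tm (j-1) with hWmd
  have hWpM : Wp ∈ Set.Icc (0:ℝ) V := hVelmem _ hprev _
  have hWmM : Wm ∈ Set.Icc (0:ℝ) V := hVelmem _ hprev _
  set B := ωd 0 * (|ρ tm (j-1)| + |ρ tm j|)
      + ∑ k ∈ Finset.Icc 1 N, (ωd (k-1) - ωd k)
          * (|ρ tm (j + (k:ℤ) - 1)| + |ρ tm (j + (k:ℤ))|) with hBd
  have hB0 : 0 ≤ B := by
    apply add_nonneg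
    · apply mul_nonneg (hωd_nonneg 0)
      exact add_nonneg (abs_nonneg _) (abs_nonneg _)
    · apply Finset.sum_nonneg
      intro k hk
      rw [Finset.mem_Icc] at hk
      exact mul_nonneg (sub_nonneg.mpr (hωd_mono k hk.1 hk.2))
        (add_nonneg (abs_nonneg _) (abs_nonneg _))
  -- sum bound via Abel identity
  have habel := aux_abel (ρ tm) ωd j N
  rw [hωdN, zero_mul, add_zero] at habel
  have hSb : |(∑ k ∈ Finset.range N, ωd k * ρ tm (j+1+(k:ℤ)))
      - (∑ k ∈ Finset.range N, ωd k * ρ tm (j-1+(k:ℤ)))| ≤ B := by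
    rw [habel]
    refine le_trans (abs_sub _ _) ?_
    have hterm : |∑ k ∈ Finset.Icc 1 N, (ωd (k-1) - ωd k) * (ρ tm (j+(k:ℤ)-1) + ρ tm (j+(k:ℤ)))|
        ≤ ∑ k ∈ Finset.Icc 1 N, (ωd (k-1) - ωd k) * (|ρ tm (j+(k:ℤ)-1)| + |ρ tm (j+(k:ℤ))|) := by
      refine le_trans (Finset.abs_sum_le_sum_abs _ _) ?_
      apply Finset.sum_le_sum
      intro k hk
      rw [Finset.mem_Icc] at hk
      rw [abs_mul, abs_of_nonneg (sub_nonneg.mpr (hωd_mono k hk.1 hk.2))]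
      exact mul_le_mul_of_nonneg_left (abs_add_le _ _)
        (sub_nonneg.mpr (hωd_mono k hk.1 hk.2))
    have hterm0 : |ωd 0 * (ρ tm (j-1) + ρ tm j)| ≤ ωd 0 * (|ρ tm (j-1)| + |ρ tm j|) := by
      rw [abs_mul, abs_of_nonneg (hωd_nonneg 0)]
      exact mul_le_mul_of_nonneg_left (abs_add_le _ _) (hωd_nonneg 0)
    rw [hBd]
    linarith
  -- velocity difference bound
  have hW : |Wp - Wm| ≤ nv' * (Δx * B) := by
    rw [hWpd, hWmd, hVel, hVel]
    have hAp := hAmem tm hprev (j+1)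
    have hAm := hAmem tm hprev (j-1)
    refine le_trans (hvlip _ hAm _ hAp) ?_
    apply mul_le_mul_of_nonneg_left _ hnv0
    have hfactor : Δx * (∑ k ∈ Finset.range N, ωd k * ρ tm (j+1+(k:ℤ)))
        - Δx * (∑ k ∈ Finset.range N, ωd k * ρ tm (j-1+(k:ℤ)))
        = Δx * ((∑ k ∈ Finset.range N, ωd k * ρ tm (j+1+(k:ℤ)))
          - (∑ k ∈ Finset.range N, ωd k * ρ tm (j-1+(k:ℤ)))) := by ring
    rw [hfactor, abs_mul, abs_of_nonneg hΔx.le]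
    exact mul_le_mul_of_nonneg_left hSb hΔx.le
  -- pieces
  have hab := hFlip b hbM a haM
  have hbc := hFlip c hcM b hbM
  have hT1 : |α*(a-b) - (a*f a - b*f b)*Wp| ≤ (α + K*V)*|a-b| := by
    have h1 : |(a*f a - b*f b)*Wp| ≤ (K*|a-b|)*V := by
      rw [abs_mul, abs_of_nonneg hWpM.1]
      exact mul_le_mul hab hWpM.2 hWpM.1 (mul_nonneg hK0 (abs_nonneg _))
    have h2 : |α*(a-b)| = α*|a-b| := by rw [abs_mul, abs_of_nonneg hα.le]
    refine le_trans (abs_sub _ _) ?_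
    rw [h2]
    linarith [h1]
  have hT2 : |α*(b-c) + (b*f b - c*f c)*Wm| ≤ (α + K*V)*|b-c| := by
    have h1 : |(b*f b - c*f c)*Wm| ≤ (K*|b-c|)*V := by
      rw [abs_mul, abs_of_nonneg hWmM.1]
      exact mul_le_mul hbc hWmM.2 hWmM.1 (mul_nonneg hK0 (abs_nonneg _))
    have h2 : |α*(b-c)| = α*|b-c| := by rw [abs_mul, abs_of_nonneg hα.le]
    refine le_trans (abs_add_le _ _) ?_
    rw [h2]
    linarith [h1]
  have hT3b : |b * f b| ≤ R := by
    rw [abs_of_nonneg (mul_nonneg hbM.1 (hf_range b hbM).1)]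
    have := mul_le_of_le_one_right hbM.1 (hf_range b hbM).2
    linarith [hbM.2]
  have hX3 : |(b*f b)*(Wp - Wm)| ≤ R * (nv' * (Δx * B)) := by
    rw [abs_mul]
    exact mul_le_mul hT3b hW (abs_nonneg _) hR.le
  have hDecomp : ρ ((n:ℤ)+1) j - ρ (n:ℤ) j
      = (Δt/Δx)/2 * ((α*(a-b) - (a*f a - b*f b)*Wp)
        - (α*(b-c) + (b*f b - c*f c)*Wm) - (b*f b)*(Wp - Wm)) := by
    rw [hsch]; ring
  rw [hDecomp, abs_mul, abs_of_nonneg (show (0:ℝ) ≤ (Δt/Δx)/2 by positivity)]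
  have htri : |(α*(a-b) - (a*f a - b*f b)*Wp)
        - (α*(b-c) + (b*f b - c*f c)*Wm) - (b*f b)*(Wp - Wm)|
      ≤ |α*(a-b) - (a*f a - b*f b)*Wp| + |α*(b-c) + (b*f b - c*f c)*Wm|
        + |(b*f b)*(Wp - Wm)| := by
    refine le_trans (abs_sub _ _) ?_
    have := abs_sub (α*(a-b) - (a*f a - b*f b)*Wp) (α*(b-c) + (b*f b - c*f c)*Wm)
    linarith
  calc (Δt/Δx)/2 * |(α*(a-b) - (a*f a - b*f b)*Wp)
        - (α*(b-c) + (b*f b - c*f c)*Wm) - (b*f b)*(Wp - Wm)|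
      ≤ (Δt/Δx)/2 * ((α + K*V)*|a-b| + (α + K*V)*|b-c| + R * (nv' * (Δx * B))) := by
        apply mul_le_mul_of_nonneg_left _ (by positivity)
        linarith [htri, hT1, hT2, hX3]
    _ = (Δt/Δx)/2 * (α + K*V) * (|a-b| + |b-c|) + (Δt/Δx)/2 * R * nv' * Δx * B := by
        ring
end
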